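/- arXiv:2201.03865 — 11 statements merged into one kernel-verified Lean document; each statement's English description precedes it below -/
import Mathlib

section
/- Let ℬ be a down-set of subsets of [n] = {1,...,n} and let ℱ ⊆ ℬ be an intersecting family. Then 2·|ℱ| ≤ |ℬ|. -/
open Finset

private lemma mem_erase_image {α : Type*} [DecidableEq α] {a : α} {ℬ : Finset (Finset α)}
    {C : Finset α} :
    C ∈ (ℬ.filter (fun B => a ∈ B)).image (fun B => B.erase a) ↔
      a ∉ C ∧ insert a C ∈ ℬ := by
  constructor
  · intro h
    obtain ⟨B, hB, rfl⟩ := mem_image.mp h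
    obtain ⟨hBℬ, haB⟩ := mem_filter.mp hB
    exact ⟨notMem_erase a B, by rwa [insert_erase haB]⟩
  · rintro ⟨haC, hins⟩
    exact mem_image.mpr ⟨insert a C, mem_filter.mpr ⟨hins, mem_insert_self a C⟩,
      erase_insert haC⟩

private lemma card_split {α : Type*} [DecidableEq α] (a : α) (X : Finset (Finset α)) :
    X.card = (X.filter (fun B => a ∉ B)).card
      + ((X.filter (fun B => a ∈ B)).image (fun B => B.erase a)).card := by
  rw [card_image_of_injOn, add_comm, card_filter_add_card_filter_not]
  intro B hB C hC h
  have haB : a ∈ B := (mem_filter.mp hB).2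
  have haC : a ∈ C := (mem_filter.mp hC).2
  have : insert a (B.erase a) = insert a (C.erase a) := congrArg (insert a) h
  rwa [insert_erase haB, insert_erase haC] at this

private lemma cross_lemma {α : Type*} [DecidableEq α] (s : Finset α)
    (ℬ ℱ 𝒢 : Finset (Finset α))
    (hsub : ∀ B ∈ ℬ, B ⊆ s)
    (hdown : ∀ B ∈ ℬ, ∀ A : Finset α, A ⊆ B → A ∈ ℬ)
    (hFB : ℱ ⊆ ℬ) (hGB : 𝒢 ⊆ ℬ)
    (hcross : ∀ A ∈ ℱ, ∀ B ∈ 𝒢, A ∩ B ≠ ∅) :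
    ℱ.card + 𝒢.card ≤ ℬ.card := by
  induction s using Finset.induction generalizing ℬ ℱ 𝒢 with
  | empty =>
      rcases ℱ.eq_empty_or_nonempty with rfl | ⟨A, hA⟩
      · simpa using card_le_card hGB
      · have hA0 : A = ∅ := subset_empty.mp (hsub A (hFB hA))
        have hG : 𝒢 = ∅ := by
          by_contra h
          obtain ⟨B, hB⟩ := nonempty_iff_ne_empty.mpr h
          exact hcross A hA B hB (by simp [hA0])
        simpa [hG] using card_le_card hFB
  | @insert a s ha ih =>
      set ℬ₀ := ℬ.filter (fun B => a ∉ B) with hB0def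
      set ℬ₁ := (ℬ.filter (fun B => a ∈ B)).image (fun B => B.erase a) with hB1def
      set ℱ₀ := ℱ.filter (fun B => a ∉ B) with hF0def
      set ℱ₁ := (ℱ.filter (fun B => a ∈ B)).image (fun B => B.erase a) with hF1def
      set 𝒢₀ := 𝒢.filter (fun B => a ∉ B) with hG0def
      set 𝒢₁ := (𝒢.filter (fun B => a ∈ B)).image (fun B => B.erase a) with hG1def
      -- basic membership facts
      have hB0mem : ∀ B, B ∈ ℬ₀ ↔ B ∈ ℬ ∧ a ∉ B := fun B => mem_filter
      have hB1mem : ∀ C, C ∈ ℬ₁ ↔ a ∉ C ∧ insert a C ∈ ℬ := fun C => mem_erase_image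
      have hF1mem : ∀ C, C ∈ ℱ₁ ↔ a ∉ C ∧ insert a C ∈ ℱ := fun C => mem_erase_image
      have hG1mem : ∀ C, C ∈ 𝒢₁ ↔ a ∉ C ∧ insert a C ∈ 𝒢 := fun C => mem_erase_image
      -- first application of IH : (ℱ₀ ∪ ℱ₁) and 𝒢₀ inside ℬ₀
      have h1 : (ℱ₀ ∪ ℱ₁).card + 𝒢₀.card ≤ ℬ₀.card := by
        apply ih
        · intro B hB
          obtain ⟨hBℬ, haB⟩ := (hB0mem B).mp hB
          intro x hx
          rcases mem_insert.mp (hsub B hBℬ hx) with rfl | h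
          · exact absurd hx haB
          · exact h
        · intro B hB A hAB
          obtain ⟨hBℬ, haB⟩ := (hB0mem B).mp hB
          exact (hB0mem A).mpr ⟨hdown B hBℬ A hAB, fun h => haB (hAB h)⟩
        · intro A hA
          rcases mem_union.mp hA with h | h
          · obtain ⟨hAF, haA⟩ := mem_filter.mp h
            exact (hB0mem A).mpr ⟨hFB hAF, haA⟩
          · obtain ⟨haA, hins⟩ := (hF1mem A).mp h
            exact (hB0mem A).mpr ⟨hdown _ (hFB hins) A (subset_insert a A), haA⟩
        · intro B hB
          obtain ⟨hBG, haB⟩ := mem_filter.mp hB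
          exact (hB0mem B).mpr ⟨hGB hBG, haB⟩
        · intro A hA B hB
          obtain ⟨hBG, haB⟩ := mem_filter.mp hB
          rcases mem_union.mp hA with h | h
          · exact hcross A (mem_filter.mp h).1 B hBG
          · obtain ⟨haA, hins⟩ := (hF1mem A).mp h
            have := hcross _ hins B hBG
            rwa [insert_inter_of_notMem haB] at this
      -- second application of IH : (ℱ₀ ∩ ℱ₁) and 𝒢₁ inside ℬ₁
      have h2 : (ℱ₀ ∩ ℱ₁).card + 𝒢₁.card ≤ ℬ₁.card := by
        apply ih
        · intro C hC
          obtain ⟨haC, hins⟩ := (hB1mem C).mp hC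
          intro x hx
          rcases mem_insert.mp (hsub _ hins (mem_insert_of_mem hx)) with rfl | h
          · exact absurd hx haC
          · exact h
        · intro C hC A hAC
          obtain ⟨haC, hins⟩ := (hB1mem C).mp hC
          refine (hB1mem A).mpr ⟨fun h => haC (hAC h), ?_⟩
          exact hdown _ hins _ (insert_subset_insert a hAC)
        · intro A hA
          obtain ⟨hA0, hA1⟩ := mem_inter.mp hA
          obtain ⟨haA, hins⟩ := (hF1mem A).mp hA1
          exact (hB1mem A).mpr ⟨haA, hFB hins⟩
        · intro C hC
          obtain ⟨haC, hins⟩ := (hG1mem C).mp hC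
          exact (hB1mem C).mpr ⟨haC, hGB hins⟩
        · intro A hA B hB
          obtain ⟨hA0, hA1⟩ := mem_inter.mp hA
          obtain ⟨hAF, haA⟩ := mem_filter.mp hA0
          obtain ⟨haB, hins⟩ := (hG1mem B).mp hB
          have := hcross A hAF _ hins
          rwa [inter_comm, insert_inter_of_notMem haA, inter_comm] at this
      have hBcard : ℬ.card = ℬ₀.card + ℬ₁.card := card_split a ℬ
      have hFcard : ℱ.card = ℱ₀.card + ℱ₁.card := card_split a ℱ
      have hGcard : 𝒢.card = 𝒢₀.card + 𝒢₁.card := card_split a 𝒢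
      have hui : (ℱ₀ ∪ ℱ₁).card + (ℱ₀ ∩ ℱ₁).card = ℱ₀.card + ℱ₁.card :=
        card_union_add_card_inter ℱ₀ ℱ₁
      omega

/-- If `ℬ` is a down-set and `ℱ ⊆ ℬ` is intersecting, then `2|ℱ| ≤ |ℬ|`. -/
theorem stmt_1 (n : ℕ) (ℬ ℱ : Finset (Finset (Fin n)))
    (hdown : ∀ B ∈ ℬ, ∀ A : Finset (Fin n), A ⊆ B → A ∈ ℬ)
    (hFB : ℱ ⊆ ℬ)
    (hF : ∀ A ∈ ℱ, ∀ B ∈ ℱ, A ∩ B ≠ ∅) :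
    2 * ℱ.card ≤ ℬ.card := by
  have := cross_lemma Finset.univ ℬ ℱ ℱ (fun B _ => subset_univ B) hdown hFB hFB hF
  omega
end

section
/- Let ℬ be a down-set of subsets of [n] = {1,...,n}. Define ℬ' = ℬ if |ℬ| is even, and ℬ' = ℬ \ {∅} if |ℬ| is odd. Then there exists a fixed-point-free involution f : ℬ' → ℬ' such that A ∩ f(A) = ∅ for every A ∈ ℬ'. (Equivalently: if |ℬ| is even, the Kneser graph on ℬ, with edges joining disjoint sets, contains a perfect matching; if |ℬ| is odd, the Kneser graph on ℬ \ {∅} contains a perfect matching.) -/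
open Finset
variable {α : Type*} [DecidableEq α]

def IsPairing (f : Finset α → Finset α) (S : Finset (Finset α)) : Prop :=
  ∀ A ∈ S, f A ∈ S ∧ f (f A) = A ∧ f A ≠ A ∧ A ∩ f A = ∅

def Pairs (S : Finset (Finset α)) : Prop := ∃ f, IsPairing f S

lemma pairs_congr {S T : Finset (Finset α)} (h : S = T) (hS : Pairs S) : Pairs T := h ▸ hS

lemma pairs_empty : Pairs (∅ : Finset (Finset α)) := ⟨id, by simp [IsPairing]⟩

lemma pairs_union {S T : Finset (Finset α)} (h : Disjoint S T) (hS : Pairs S) (hT : Pairs T) :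
    Pairs (S ∪ T) := by
  classical
  obtain ⟨f, hf⟩ := hS
  obtain ⟨g, hg⟩ := hT
  refine ⟨fun A => if A ∈ S then f A else g A, ?_⟩
  intro A hA
  rcases mem_union.1 hA with h1 | h1
  · obtain ⟨m, i, ne, d⟩ := hf A h1
    refine ⟨?_, ?_, ?_, ?_⟩
    · simp only [if_pos h1]; exact mem_union_left _ m
    · simp only [if_pos h1, if_pos m, i]
    · simpa [h1] using ne
    · simpa [h1] using d
  · have h1S : A ∉ S := fun hA' => (Finset.disjoint_left.1 h hA') h1
    obtain ⟨m, i, ne, d⟩ := hg A h1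
    have hmS : g A ∉ S := fun hA' => (Finset.disjoint_left.1 h hA') m
    refine ⟨?_, ?_, ?_, ?_⟩
    · simp only [if_neg h1S]; exact mem_union_right _ m
    · simp only [if_neg h1S, if_neg hmS, i]
    · simpa [h1S] using ne
    · simpa [h1S] using d

lemma pairs_pair {a b : Finset α} (hab : a ≠ b) (hd : a ∩ b = ∅) :
    Pairs ({a, b} : Finset (Finset α)) := by
  classical
  refine ⟨fun X => if X = a then b else a, ?_⟩
  intro A hA
  rcases mem_insert.1 hA with rfl | hA
  · refine ⟨by simp, ?_, ?_, ?_⟩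
    · simp [hab.symm]
    · simpa using hab.symm
    · simpa using hd
  · rcases mem_singleton.1 hA with rfl
    refine ⟨by simp, ?_, ?_, ?_⟩
    · simp [hab.symm]
    · simpa [hab.symm] using hab
    · simpa [hab.symm, inter_comm] using hd

lemma pairs_insert2 {S : Finset (Finset α)} {a b : Finset α} (h : Pairs S) (ha : a ∉ S)
    (hb : b ∉ S) (hab : a ≠ b) (hd : a ∩ b = ∅) : Pairs (insert a (insert b S)) := by
  have hdisj : Disjoint ({a, b} : Finset (Finset α)) S := by
    simp only [Finset.disjoint_left, mem_insert, mem_singleton]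
    rintro X (rfl | rfl) <;> assumption
  have := pairs_union hdisj (pairs_pair hab hd) h
  refine pairs_congr ?_ this
  ext X; simp [or_assoc]

lemma IsPairing.restrict {f : Finset α → Finset α} {S : Finset (Finset α)} (hf : IsPairing f S)
    {a : Finset α} (ha : a ∈ S) : IsPairing f ((S.erase a).erase (f a)) := by
  obtain ⟨mfa, ifa, nea, _⟩ := hf a ha
  intro B hB
  have hBfa : B ≠ f a := (mem_erase.1 hB).1
  have hBa : B ≠ a := (mem_erase.1 (mem_of_mem_erase hB)).1
  have hBS : B ∈ S := mem_of_mem_erase (mem_of_mem_erase hB)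
  obtain ⟨m, i, ne, d⟩ := hf B hBS
  refine ⟨?_, i, ne, d⟩
  refine mem_erase.2 ⟨?_, mem_erase.2 ⟨?_, m⟩⟩
  · intro hfB
    exact hBa (i.symm.trans (by rw [hfB, ifa]))
  · intro hfB
    exact hBfa (i.symm.trans (by rw [hfB]))

lemma pairs_even {S : Finset (Finset α)} (h : Pairs S) : Even S.card := by
  classical
  obtain ⟨f, hf⟩ := h
  generalize hN : S.card = N
  induction N using Nat.strong_induction_on generalizing S f with
  | _ N IH =>
    rcases S.eq_empty_or_nonempty with rfl | ⟨a, ha⟩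
    · simp at hN; simp [← hN]
    · obtain ⟨m, i, ne, d⟩ := hf a ha
      have hrest := hf.restrict ha
      have hfa : f a ∈ S.erase a := mem_erase.2 ⟨ne, m⟩
      have hc : ((S.erase a).erase (f a)).card = N - 2 := by
        rw [card_erase_of_mem hfa, card_erase_of_mem ha, hN]
        omega
      have h2 : 2 ≤ N := by
        rw [← hN]
        exact Finset.one_lt_card.2 ⟨a, ha, f a, m, ne.symm⟩
      have hev := IH (N - 2) (by omega) _ hrest hc
      rw [Nat.even_iff] at hev ⊢
      omega

def sdm (A B : Finset (Finset α)) : Finset (Finset α) := (A ∪ B) \ (A ∩ B)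

lemma sdm_self (A : Finset (Finset α)) : sdm A A = ∅ := by simp [sdm]

lemma sdm_empty_left (A : Finset (Finset α)) : sdm ∅ A = A := by simp [sdm]

lemma sdm_empty_right (A : Finset (Finset α)) : sdm A ∅ = A := by simp [sdm]

lemma sdm_subset (A B : Finset (Finset α)) : sdm A B ⊆ A ∪ B := sdiff_subset

def board (x : α) (W T : Finset (Finset α)) : Finset (Finset α) := W ∪ T.image (insert x)

lemma mem_board {x : α} {W T : Finset (Finset α)} {S : Finset α} :
    S ∈ board x W T ↔ S ∈ W ∨ ∃ B ∈ T, insert x B = S := by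
  simp [board]

lemma tag_inj {x : α} {A B : Finset α} (hA : x ∉ A) (hB : x ∉ B)
    (h : insert x A = insert x B) : A = B := by
  rw [← Finset.erase_insert hA, h, Finset.erase_insert hB]

lemma tag_notMem {x : α} {W : Finset (Finset α)} (hxW : ∀ A ∈ W, x ∉ A) (B : Finset α) :
    insert x B ∉ W := fun h => hxW _ h (mem_insert_self x B)

-- L1 : leftover empty set removal
lemma board_erase_empty {x : α} {W T : Finset (Finset α)} (h : ∅ ∉ T) :
    board x W T \ {∅} = board x (W.erase ∅) T := by
  ext S
  simp only [mem_sdiff, mem_board, mem_erase, mem_singleton]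
  constructor
  · rintro ⟨hS | ⟨B, hB, rfl⟩, hne⟩
    · exact Or.inl ⟨hne, hS⟩
    · exact Or.inr ⟨B, hB, rfl⟩
  · rintro (⟨hne, hS⟩ | ⟨B, hB, rfl⟩)
    · exact ⟨Or.inl hS, hne⟩
    · exact ⟨Or.inr ⟨B, hB, rfl⟩, by simp⟩

-- L2 : remove an untagged E and the tag of Y
lemma board_decomp_mixed {x : α} {W T : Finset (Finset α)} {E Y : Finset α} {L : Finset (Finset α)}
    (hxW : ∀ A ∈ W, x ∉ A) (hTW : T ⊆ W) (hE : E ∈ W) (hY : Y ∈ T)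
    (hL : L ⊆ {∅}) (hEL : E ∉ L) :
    board x W T \ L = insert E (insert (insert x Y) (board x (W.erase E) (T.erase Y) \ L)) := by
  have hxE : x ∉ E := hxW E hE
  have htagL : ∀ B : Finset α, insert x B ∉ L := by
    intro B hB
    have := hL hB
    simp only [mem_singleton] at this
    exact (insert_ne_empty x B) this
  ext S
  simp only [mem_sdiff, mem_board, mem_insert, mem_erase]
  constructor
  · rintro ⟨hS | ⟨B, hB, rfl⟩, hne⟩
    · by_cases hSE : S = E
      · exact Or.inl hSE
      · exact Or.inr (Or.inr ⟨Or.inl ⟨hSE, hS⟩, hne⟩)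
    · by_cases hBY : B = Y
      · subst hBY; exact Or.inr (Or.inl rfl)
      · exact Or.inr (Or.inr ⟨Or.inr ⟨B, ⟨hBY, hB⟩, rfl⟩, hne⟩)
  · rintro (rfl | rfl | ⟨hS | ⟨B, ⟨hBY, hB⟩, rfl⟩, hne⟩)
    · exact ⟨Or.inl hE, hEL⟩
    · exact ⟨Or.inr ⟨Y, hY, rfl⟩, htagL Y⟩
    · exact ⟨Or.inl hS.2, hne⟩
    · exact ⟨Or.inr ⟨B, hB, rfl⟩, hne⟩

-- L3 : remove two untagged sets
lemma board_decomp_untagged {x : α} {W T : Finset (Finset α)} {E Y : Finset α}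
    {L : Finset (Finset α)} (hE : E ∈ W) (hY : Y ∈ W)
    (hL : L ⊆ {∅}) (hEL : E ∉ L) (hYL : Y ∉ L) :
    board x W T \ L = insert E (insert Y (board x ((W.erase E).erase Y) T \ L)) := by
  have htagL : ∀ B : Finset α, insert x B ∉ L := by
    intro B hB
    have := hL hB
    simp only [mem_singleton] at this
    exact (insert_ne_empty x B) this
  ext S
  simp only [mem_sdiff, mem_board, mem_insert, mem_erase]
  constructor
  · rintro ⟨hS | ⟨B, hB, rfl⟩, hne⟩
    · by_cases hSE : S = E
      · exact Or.inl hSE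
      · by_cases hSY : S = Y
        · exact Or.inr (Or.inl hSY)
        · exact Or.inr (Or.inr ⟨Or.inl ⟨hSY, hSE, hS⟩, hne⟩)
    · exact Or.inr (Or.inr ⟨Or.inr ⟨B, hB, rfl⟩, hne⟩)
  · rintro (rfl | rfl | ⟨hS | ⟨B, hB, rfl⟩, hne⟩)
    · exact ⟨Or.inl hE, hEL⟩
    · exact ⟨Or.inl hY, hYL⟩
    · exact ⟨Or.inl hS.2.2, hne⟩
    · exact ⟨Or.inr ⟨B, hB, rfl⟩, hne⟩

-- L4 : remove untagged E, the tag of ∅, with ∅ as leftover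
lemma board_decomp_tagempty {x : α} {W T : Finset (Finset α)} {E : Finset α}
    (hxW : ∀ A ∈ W, x ∉ A) (hTW : T ⊆ W) (hE : E ∈ W) (hne : E ≠ ∅) (h0T : ∅ ∈ T) :
    board x W T \ {∅} =
      insert E (insert {x} (board x ((W.erase E).erase ∅) (T.erase ∅))) := by
  have hxE : x ∉ E := hxW E hE
  ext S
  simp only [mem_sdiff, mem_board, mem_insert, mem_erase, mem_singleton]
  constructor
  · rintro ⟨hS | ⟨B, hB, rfl⟩, hne'⟩
    · by_cases hSE : S = E
      · exact Or.inl hSE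
      · exact Or.inr (Or.inr (Or.inl ⟨hne', hSE, hS⟩))
    · by_cases hB0 : B = ∅
      · subst hB0
        exact Or.inr (Or.inl (by simp))
      · exact Or.inr (Or.inr (Or.inr ⟨B, ⟨hB0, hB⟩, rfl⟩))
  · rintro (rfl | rfl | ⟨h1, h2, h3⟩ | ⟨B, ⟨hB0, hB⟩, rfl⟩)
    · exact ⟨Or.inl hE, hne⟩
    · exact ⟨Or.inr ⟨∅, h0T, by simp⟩, by simp⟩
    · exact ⟨Or.inl h3, h1⟩
    · exact ⟨Or.inr ⟨B, hB, rfl⟩, by simp⟩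

-- base case with Ac = ∅
lemma base_pairs_even {x : α} {W : Finset (Finset α)} {g : Finset α → Finset α}
    (hxW : ∀ A ∈ W, x ∉ A) (hg : IsPairing g W) : Pairs (board x W W) := by
  classical
  refine ⟨fun S => if x ∈ S then g (S.erase x) else insert x (g S), ?_⟩
  intro S hS
  rcases mem_board.1 hS with hSW | ⟨B, hB, rfl⟩
  · have hxS : x ∉ S := hxW S hSW
    obtain ⟨m, i, ne, d⟩ := hg S hSW
    have hxg : x ∉ g S := hxW _ m
    simp only [if_neg hxS]
    refine ⟨mem_board.2 (Or.inr ⟨g S, m, rfl⟩), ?_, ?_, ?_⟩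
    · rw [if_pos (mem_insert_self x (g S)), Finset.erase_insert hxg, i]
    · intro h
      exact hxS (h ▸ mem_insert_self x (g S))
    · rw [Finset.inter_insert_of_notMem hxS, d]
  · have hxB : x ∉ B := hxW B hB
    obtain ⟨m, i, ne, d⟩ := hg B hB
    have hxg : x ∉ g B := hxW _ m
    have hxS : x ∈ insert x B := mem_insert_self x B
    simp only [if_pos hxS, Finset.erase_insert hxB]
    refine ⟨mem_board.2 (Or.inl m), ?_, ?_, ?_⟩
    · rw [if_neg hxg, i]
    · intro h
      exact hxg (h ▸ hxS)
    · rw [Finset.insert_inter_of_notMem hxg, d]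

-- base case with Ac = {∅}
lemma base_pairs_odd {x : α} {W : Finset (Finset α)} {g : Finset α → Finset α}
    (hxW : ∀ A ∈ W, x ∉ A) (h0W : ∅ ∈ W) (hg : IsPairing g (W.erase ∅)) :
    Pairs (board x W W) := by
  classical
  have hxne : ({x} : Finset α) ≠ ∅ := by simp
  obtain ⟨F, hF0, hFx, hFt, hFu⟩ : ∃ F : Finset α → Finset α, F ∅ = {x} ∧ F {x} = ∅ ∧
      (∀ S, S ≠ {x} → x ∈ S → F S = g (S.erase x)) ∧
      (∀ S, S ≠ ∅ → x ∉ S → F S = insert x (g S)) := by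
    refine ⟨fun S => if S = ∅ then {x} else if S = {x} then ∅ else
      if x ∈ S then g (S.erase x) else insert x (g S), by simp, by simp, ?_, ?_⟩
    · intro S h1 h2
      beta_reduce
      rw [if_neg (ne_empty_of_mem h2), if_neg h1, if_pos h2]
    · intro S h1 h2
      beta_reduce
      have h3 : S ≠ {x} := by
        intro h
        exact h2 (h ▸ mem_singleton_self x)
      rw [if_neg h1, if_neg h3, if_neg h2]
  refine ⟨F, ?_⟩
  intro S hS
  rcases mem_board.1 hS with hSW | ⟨B, hB, rfl⟩
  · have hxS : x ∉ S := hxW S hSW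
    by_cases hS0 : S = ∅
    · subst hS0
      rw [hF0]
      refine ⟨mem_board.2 (Or.inr ⟨∅, h0W, rfl⟩), ?_, hxne, by simp⟩
      rw [hFx]
    · obtain ⟨m, i, ne, d⟩ := hg S (mem_erase.2 ⟨hS0, hSW⟩)
      have hgW : g S ∈ W := mem_of_mem_erase m
      have hg0 : g S ≠ ∅ := (mem_erase.1 m).1
      have hxg : x ∉ g S := hxW _ hgW
      have htnx : insert x (g S) ≠ {x} := by
        intro h
        apply hg0
        have := Finset.erase_insert hxg
        rw [h] at this
        simpa using this.symm
      rw [hFu S hS0 hxS]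
      refine ⟨mem_board.2 (Or.inr ⟨g S, hgW, rfl⟩), ?_, ?_, ?_⟩
      · rw [hFt _ htnx (mem_insert_self x (g S)), Finset.erase_insert hxg, i]
      · intro h
        exact hxS (h ▸ mem_insert_self x (g S))
      · rw [Finset.inter_insert_of_notMem hxS, d]
  · have hxB : x ∉ B := hxW B hB
    by_cases hB0 : B = ∅
    · subst hB0
      have : insert x ∅ = ({x} : Finset α) := rfl
      rw [this, hFx]
      exact ⟨mem_board.2 (Or.inl h0W), by rw [hF0], hxne.symm, by simp⟩
    · have hSnx : insert x B ≠ {x} := by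
        intro h
        apply hB0
        have := Finset.erase_insert hxB
        rw [h] at this
        simpa using this.symm
      obtain ⟨m, i, ne, d⟩ := hg B (mem_erase.2 ⟨hB0, hB⟩)
      have hgW : g B ∈ W := mem_of_mem_erase m
      have hg0 : g B ≠ ∅ := (mem_erase.1 m).1
      have hxg : x ∉ g B := hxW _ hgW
      have hxS : x ∈ insert x B := mem_insert_self x B
      rw [hFt _ hSnx hxS, Finset.erase_insert hxB]
      refine ⟨mem_board.2 (Or.inl hgW), ?_, ?_, ?_⟩
      · rw [hFu _ hg0 hxg, i]
      · intro h
        exact hxg (h ▸ hxS)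
      · rw [Finset.insert_inter_of_notMem hxg, d]


lemma untagged_notMem_board {x : α} {W T : Finset (Finset α)} {S : Finset α}
    (hxS : x ∉ S) (hS : S ∉ W) : S ∉ board x W T := by
  rw [mem_board]
  rintro (h | ⟨B, hB, rfl⟩)
  · exact hS h
  · exact hxS (mem_insert_self x B)

lemma tag_notMem_board {x : α} {W T : Finset (Finset α)} {B : Finset α}
    (hxW : ∀ A ∈ W, x ∉ A) (hTW : T ⊆ W) (hB : B ∉ T) (hxB : x ∉ B) :
    insert x B ∉ board x W T := by
  rw [mem_board]
  rintro (h | ⟨B', hB', he⟩)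
  · exact hxW _ h (mem_insert_self x B)
  · exact hB ((tag_inj (hxW _ (hTW hB')) hxB he) ▸ hB')

lemma sdm_sub {Av Ac : Finset (Finset α)} (h1 : Av ⊆ {∅}) (h2 : Ac ⊆ {∅}) :
    sdm Av Ac ⊆ {∅} := (sdm_subset _ _).trans (union_subset h1 h2)

lemma notMem_sdm {Av Ac : Finset (Finset α)} {E : Finset α} (h1 : E ∉ Av) (h2 : E ∉ Ac) :
    E ∉ sdm Av Ac := by
  intro h
  rcases mem_union.1 (sdm_subset _ _ h) with h | h
  exacts [h1 h, h2 h]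

lemma notMem_of_notMem_board {x : α} {W T L : Finset (Finset α)} {S : Finset α}
    (h : S ∉ board x W T) : S ∉ board x W T \ L := fun hh => h (mem_sdiff.1 hh).1
lemma mega (x : α) : ∀ N : ℕ,
    (∀ (W T Av Ac : Finset (Finset α)) (f g : Finset α → Finset α),
      W.card + T.card ≤ N → T ⊆ W → (∀ A ∈ W, x ∉ A) →
      Av ⊆ {∅} → Av ⊆ W → Ac ⊆ {∅} → Ac ⊆ T →
      IsPairing f (W \ Av) → IsPairing g (T \ Ac) →
      Pairs (board x W T \ sdm Av Ac)) ∧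
    (∀ (W T Av Ac : Finset (Finset α)) (f g : Finset α → Finset α) (D : Finset α),
      W.card + T.card ≤ N → T ⊆ W → (∀ A ∈ W, x ∉ A) →
      Av ⊆ {∅} → Av ⊆ W → Ac ⊆ {∅} → Ac ⊆ insert D T →
      D ∈ W → D ∉ T → D ∉ Av →
      IsPairing f ((W \ Av).erase D) → IsPairing g ((insert D T) \ Ac) →
      Pairs (board x W T \ sdm Av Ac)) := by
  intro N
  induction N using Nat.strong_induction_on with
  | _ N IH =>
  constructor
  · -- Phase A
    intro W T Av Ac f g hN hTW hxW hAv hAvW hAc hAcT hf hg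
    by_cases hWT : W = T
    · -- base case : W = T, use only g
      subst hWT
      have hAvAc : Av = Ac := by
        have e1 := pairs_even ⟨f, hf⟩
        have e2 := pairs_even ⟨g, hg⟩
        rw [card_sdiff_of_subset hAvW, Nat.even_iff] at e1
        rw [card_sdiff_of_subset hAcT, Nat.even_iff] at e2
        have l1 : Av.card ≤ W.card := card_le_card hAvW
        have l2 : Ac.card ≤ W.card := card_le_card hAcT
        rcases Finset.subset_singleton_iff.1 hAv with rfl | hAve <;>
          rcases Finset.subset_singleton_iff.1 hAc with rfl | hAce
        · rfl
        · exfalso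
          rw [hAce] at e2 l2
          simp only [card_empty, card_singleton] at e1 e2 l1 l2
          omega
        · exfalso
          rw [hAve] at e1 l1
          simp only [card_empty, card_singleton] at e1 e2 l1 l2
          omega
        · rw [hAve, hAce]
      subst hAvAc
      rw [sdm_self, sdiff_empty]
      rcases Finset.subset_singleton_iff.1 hAv with hAve | hAve
      · rw [hAve, sdiff_empty] at hg
        exact base_pairs_even hxW hg
      · have h0W : ∅ ∈ W := hAvW (hAve ▸ mem_singleton_self ∅)
        rw [hAve, ← erase_eq] at hg
        exact base_pairs_odd hxW h0W hg
    · by_cases hEx : ∃ E ∈ W, E ∉ T ∧ E ∉ Av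
      · obtain ⟨E, hEW, hET, hEAv⟩ := hEx
        have hEmem : E ∈ W \ Av := mem_sdiff.2 ⟨hEW, hEAv⟩
        obtain ⟨hYmem, iE, neE, dE⟩ := hf E hEmem
        have hYW : f E ∈ W := (mem_sdiff.1 hYmem).1
        have hYAv : f E ∉ Av := (mem_sdiff.1 hYmem).2
        have hxE : x ∉ E := hxW E hEW
        have hxY : x ∉ f E := hxW _ hYW
        have hcW : 1 ≤ W.card := card_pos.2 ⟨E, hEW⟩
        by_cases hYT : f E ∈ T
        · have hcT : 1 ≤ T.card := card_pos.2 ⟨f E, hYT⟩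
          by_cases hYAc : f E ∈ Ac
          · -- A1b : f E = ∅ is the g-missing vertex; leftover ∅ here
            have hY0 : f E = ∅ := by simpa using hAc hYAc
            have h0T : ∅ ∈ T := hY0 ▸ hYT
            have hE0 : E ≠ ∅ := fun h => neE (by rw [hY0, h])
            have hAve : Av = ∅ := by
              rcases Finset.subset_singleton_iff.1 hAv with h | h
              · exact h
              · exact absurd (h ▸ mem_singleton_self ∅) (hY0 ▸ hYAv)
            have hAce : Ac = {∅} := by
              rcases Finset.subset_singleton_iff.1 hAc with h | h
              · exact absurd (h ▸ hYAc) (by simp [hY0])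
              · exact h
            have h0WE : ∅ ∈ W.erase E := mem_erase.2 ⟨fun h => hE0 h.symm, hTW h0T⟩
            have hc2 : 2 ≤ W.card := Finset.one_lt_card.2 ⟨E, hEW, ∅, hTW h0T, hE0⟩
            have hfW : IsPairing f W := by rwa [hAve, sdiff_empty] at hf
            have hres := hfW.restrict hEW
            rw [hY0] at hres
            have hf' : IsPairing f (((W.erase E).erase ∅) \ ∅) := by
              rwa [sdiff_empty]
            have hg' : IsPairing g ((T.erase ∅) \ ∅) := by
              rw [sdiff_empty, erase_eq]
              rwa [hAce] at hg
            obtain ⟨A_IH, _⟩ := IH (N - 1) (by omega)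
            have hcard' : ((W.erase E).erase ∅).card + (T.erase ∅).card ≤ N - 1 := by
              rw [card_erase_of_mem h0WE, card_erase_of_mem hEW, card_erase_of_mem h0T]
              omega
            have hTW' : T.erase ∅ ⊆ (W.erase E).erase ∅ := by
              intro t ht
              obtain ⟨ht0, htT⟩ := mem_erase.1 ht
              exact mem_erase.2 ⟨ht0, mem_erase.2 ⟨fun h => hET (h ▸ htT), hTW htT⟩⟩
            have hxW' : ∀ A ∈ (W.erase E).erase ∅, x ∉ A := fun A hA =>
              hxW A (mem_of_mem_erase (mem_of_mem_erase hA))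
            have P := A_IH _ _ ∅ ∅ f g hcard' hTW' hxW' (empty_subset _) (empty_subset _)
              (empty_subset _) (empty_subset _) hf' hg'
            rw [sdm_self, sdiff_empty] at P
            have hEnb : E ∉ board x ((W.erase E).erase ∅) (T.erase ∅) :=
              untagged_notMem_board hxE (fun h => notMem_erase E W (mem_of_mem_erase h))
            have htnb : insert x ∅ ∉ board x ((W.erase E).erase ∅) (T.erase ∅) :=
              tag_notMem_board hxW' hTW' (notMem_erase ∅ T) (notMem_empty x)
            have P2 := pairs_insert2 P hEnb htnb
              (fun h => hxE (h ▸ mem_insert_self x ∅))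
              (by rw [Finset.inter_insert_of_notMem hxE, inter_empty])
            rw [hAve, hAce, sdm_empty_left]
            refine pairs_congr ?_ P2
            have hdec := board_decomp_tagempty hxW hTW hEW hE0 h0T
            rw [hdec]
            rfl
          · -- A1a : continue the walk, go to phase Bg
            obtain ⟨_, Bg_IH⟩ := IH (N - 1) (by omega)
            have hf' : IsPairing f (((W.erase E) \ Av).erase (f E)) := by
              have := hf.restrict hEmem
              rwa [← Finset.erase_sdiff_comm] at this
            have hg' : IsPairing g ((insert (f E) (T.erase (f E))) \ Ac) := by
              rwa [insert_erase hYT]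
            have hcard' : (W.erase E).card + (T.erase (f E)).card ≤ N - 1 := by
              rw [card_erase_of_mem hEW, card_erase_of_mem hYT]
              omega
            have hTW' : T.erase (f E) ⊆ W.erase E := by
              intro t ht
              obtain ⟨htY, htT⟩ := mem_erase.1 ht
              exact mem_erase.2 ⟨fun h => hET (h ▸ htT), hTW htT⟩
            have hxW' : ∀ A ∈ W.erase E, x ∉ A := fun A hA => hxW A (mem_of_mem_erase hA)
            have hEAc : E ∉ Ac := fun h => hET (hAcT h)
            have P := Bg_IH (W.erase E) (T.erase (f E)) Av Ac f g (f E) hcard' hTW' hxW'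
              hAv (fun a ha => mem_erase.2 ⟨fun h => hEAv (h ▸ ha), hAvW ha⟩) hAc
              (by rw [insert_erase hYT]; exact hAcT)
              (mem_erase.2 ⟨neE, hYW⟩) (notMem_erase _ _) hYAv hf' hg'
            have hEnb : E ∉ board x (W.erase E) (T.erase (f E)) :=
              untagged_notMem_board hxE (notMem_erase E W)
            have htnb : insert x (f E) ∉ board x (W.erase E) (T.erase (f E)) :=
              tag_notMem_board hxW' hTW' (notMem_erase _ _) hxY
            have P2 := pairs_insert2 P (notMem_of_notMem_board hEnb)
              (notMem_of_notMem_board htnb)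
              (fun h => hxE (h ▸ mem_insert_self x (f E)))
              (by rw [Finset.inter_insert_of_notMem hxE, dE])
            refine pairs_congr ?_ P2
            rw [board_decomp_mixed hxW hTW hEW hYT (sdm_sub hAv hAc) (notMem_sdm hEAv hEAc)]
        · -- A1c : a whole pair outside T, remove it
          obtain ⟨A_IH, _⟩ := IH (N - 1) (by omega)
          have hc2 : 2 ≤ W.card := Finset.one_lt_card.2 ⟨E, hEW, f E, hYW, neE.symm⟩
          have hf' : IsPairing f (((W.erase E).erase (f E)) \ Av) := by
            have := hf.restrict hEmem
            rw [← Finset.erase_sdiff_comm] at this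
            rwa [← Finset.erase_sdiff_comm] at this
          have hYWE : f E ∈ W.erase E := mem_erase.2 ⟨neE, hYW⟩
          have hcard' : ((W.erase E).erase (f E)).card + T.card ≤ N - 1 := by
            rw [card_erase_of_mem hYWE, card_erase_of_mem hEW]
            omega
          have hTW' : T ⊆ (W.erase E).erase (f E) := by
            intro t ht
            exact mem_erase.2 ⟨fun h => hYT (h ▸ ht), mem_erase.2 ⟨fun h => hET (h ▸ ht), hTW ht⟩⟩
          have hxW' : ∀ A ∈ (W.erase E).erase (f E), x ∉ A := fun A hA =>
            hxW A (mem_of_mem_erase (mem_of_mem_erase hA))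
          have hAvW' : Av ⊆ (W.erase E).erase (f E) := fun a ha =>
            mem_erase.2 ⟨fun h => hYAv (h ▸ ha), mem_erase.2 ⟨fun h => hEAv (h ▸ ha), hAvW ha⟩⟩
          have P := A_IH _ _ Av Ac f g hcard' hTW' hxW' hAv hAvW' hAc hAcT hf' hg
          have hEnb : E ∉ board x ((W.erase E).erase (f E)) T :=
            untagged_notMem_board hxE (fun h => notMem_erase E W (mem_of_mem_erase h))
          have hYnb : f E ∉ board x ((W.erase E).erase (f E)) T :=
            untagged_notMem_board hxY (notMem_erase _ _)
          have hEAc : E ∉ Ac := fun h => hET (hAcT h)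
          have hYAc : f E ∉ Ac := fun h => hYT (hAcT h)
          have P2 := pairs_insert2 P (notMem_of_notMem_board hEnb)
            (notMem_of_notMem_board hYnb) neE.symm dE
          refine pairs_congr ?_ P2
          rw [board_decomp_untagged hEW hYW (sdm_sub hAv hAc) (notMem_sdm hEAv hEAc)
            (notMem_sdm hYAv hYAc)]
      · -- A2 : the only element of W \ T is ∅ ∈ Av ; leftover ∅
        push_neg at hEx
        have hss : T ⊂ W := Finset.ssubset_iff_subset_ne.2 ⟨hTW, fun h => hWT h.symm⟩
        obtain ⟨E, hEW, hET⟩ := exists_of_ssubset hss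
        have hEAv : E ∈ Av := hEx E hEW hET
        have hE0 : E = ∅ := by simpa using hAv hEAv
        subst hE0
        have hAve : Av = {∅} := by
          rcases Finset.subset_singleton_iff.1 hAv with h | h
          · exact absurd hEAv (h ▸ notMem_empty ∅)
          · exact h
        have hAce : Ac = ∅ := by
          rcases Finset.subset_singleton_iff.1 hAc with h | h
          · exact h
          · exact absurd (hAcT (h ▸ mem_singleton_self ∅)) hET
        have hcW : 1 ≤ W.card := card_pos.2 ⟨∅, hEW⟩
        obtain ⟨A_IH, _⟩ := IH (N - 1) (by omega)
        have hcard' : (W.erase ∅).card + T.card ≤ N - 1 := by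
          rw [card_erase_of_mem hEW]
          omega
        have hTW' : T ⊆ W.erase ∅ := fun t ht =>
          mem_erase.2 ⟨fun h => hET (h ▸ ht), hTW ht⟩
        have hxW' : ∀ A ∈ W.erase ∅, x ∉ A := fun A hA => hxW A (mem_of_mem_erase hA)
        have hf' : IsPairing f ((W.erase ∅) \ ∅) := by
          rw [sdiff_empty, erase_eq]
          rwa [hAve] at hf
        have hg' : IsPairing g (T \ ∅) := by
          rwa [hAce] at hg
        have P := A_IH _ _ ∅ ∅ f g hcard' hTW' hxW' (empty_subset _) (empty_subset _)
          (empty_subset _) (empty_subset _) hf' hg'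
        rw [sdm_self, sdiff_empty] at P
        rw [hAve, hAce, sdm_empty_right]
        exact pairs_congr (board_erase_empty hET).symm P
  · -- Phase Bg
    intro W T Av Ac f g D hN hTW hxW hAv hAvW hAc hAcT hDW hDT hDAv hf hg
    by_cases hDAc : D ∈ Ac
    · -- walk ends : D = ∅ is g-missing ; leftover ∅
      have hD0 : D = ∅ := by simpa using hAc hDAc
      subst hD0
      have hAve : Av = ∅ := by
        rcases Finset.subset_singleton_iff.1 hAv with h | h
        · exact h
        · exact absurd (h ▸ mem_singleton_self ∅) hDAv
      have hAce : Ac = {∅} := by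
        rcases Finset.subset_singleton_iff.1 hAc with h | h
        · exact absurd hDAc (h ▸ notMem_empty ∅)
        · exact h
      have hcW : 1 ≤ W.card := card_pos.2 ⟨∅, hDW⟩
      obtain ⟨A_IH, _⟩ := IH (N - 1) (by omega)
      have hcard' : (W.erase ∅).card + T.card ≤ N - 1 := by
        rw [card_erase_of_mem hDW]
        omega
      have hTW' : T ⊆ W.erase ∅ := fun t ht =>
        mem_erase.2 ⟨fun h => hDT (h ▸ ht), hTW ht⟩
      have hxW' : ∀ A ∈ W.erase ∅, x ∉ A := fun A hA => hxW A (mem_of_mem_erase hA)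
      have hf' : IsPairing f ((W.erase ∅) \ ∅) := by
        rw [sdiff_empty]
        rwa [hAve, sdiff_empty] at hf
      have hg' : IsPairing g (T \ ∅) := by
        rw [sdiff_empty]
        rw [hAce, ← erase_eq] at hg
        rwa [erase_insert hDT] at hg
      have P := A_IH _ _ ∅ ∅ f g hcard' hTW' hxW' (empty_subset _) (empty_subset _)
        (empty_subset _) (empty_subset _) hf' hg'
      rw [sdm_self, sdiff_empty] at P
      rw [hAve, hAce, sdm_empty_left]
      exact pairs_congr (board_erase_empty hDT).symm P
    · -- walk continues : pair D with the tag of g D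
      have hDmem : D ∈ (insert D T) \ Ac := mem_sdiff.2 ⟨mem_insert_self D T, hDAc⟩
      obtain ⟨hZmem, iD, neD, dD⟩ := hg D hDmem
      have hZT : g D ∈ T := by
        rcases mem_insert.1 (mem_sdiff.1 hZmem).1 with h | h
        · exact absurd h neD
        · exact h
      have hZAc : g D ∉ Ac := (mem_sdiff.1 hZmem).2
      have hZW : g D ∈ W := hTW hZT
      have hxD : x ∉ D := hxW D hDW
      have hxZ : x ∉ g D := hxW _ hZW
      have hcW : 1 ≤ W.card := card_pos.2 ⟨D, hDW⟩
      have hcT : 1 ≤ T.card := card_pos.2 ⟨g D, hZT⟩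
      obtain ⟨A_IH, _⟩ := IH (N - 1) (by omega)
      have hcard' : (W.erase D).card + (T.erase (g D)).card ≤ N - 1 := by
        rw [card_erase_of_mem hDW, card_erase_of_mem hZT]
        omega
      have hTW' : T.erase (g D) ⊆ W.erase D := by
        intro t ht
        obtain ⟨htZ, htT⟩ := mem_erase.1 ht
        exact mem_erase.2 ⟨fun h => hDT (h ▸ htT), hTW htT⟩
      have hxW' : ∀ A ∈ W.erase D, x ∉ A := fun A hA => hxW A (mem_of_mem_erase hA)
      have hAvW' : Av ⊆ W.erase D := fun a ha =>
        mem_erase.2 ⟨fun h => hDAv (h ▸ ha), hAvW ha⟩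
      have hAcT' : Ac ⊆ T.erase (g D) := by
        intro a ha
        rcases mem_insert.1 (hAcT ha) with h | h
        · exact absurd (h ▸ ha) hDAc
        · exact mem_erase.2 ⟨fun hh => hZAc (hh ▸ ha), h⟩
      have hf' : IsPairing f ((W.erase D) \ Av) := by
        rwa [Finset.erase_sdiff_comm]
      have hg' : IsPairing g ((T.erase (g D)) \ Ac) := by
        have := hg.restrict hDmem
        rw [← Finset.erase_sdiff_comm, erase_insert hDT] at this
        rwa [← Finset.erase_sdiff_comm] at this
      have P := A_IH _ _ Av Ac f g hcard' hTW' hxW' hAv hAvW' hAc hAcT' hf' hg'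
      have hDnb : D ∉ board x (W.erase D) (T.erase (g D)) :=
        untagged_notMem_board hxD (notMem_erase D W)
      have htnb : insert x (g D) ∉ board x (W.erase D) (T.erase (g D)) :=
        tag_notMem_board hxW' hTW' (notMem_erase _ _) hxZ
      have P2 := pairs_insert2 P (notMem_of_notMem_board hDnb)
        (notMem_of_notMem_board htnb)
        (fun h => hxD (h ▸ mem_insert_self x (g D)))
        (by rw [Finset.inter_insert_of_notMem hxD, dD])
      refine pairs_congr ?_ P2
      rw [board_decomp_mixed hxW hTW hDW hZT (sdm_sub hAv hAc) (notMem_sdm hDAv hDAc)]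
lemma berge_main (U : Finset α) : ∀ ℬ : Finset (Finset α),
    (∀ B ∈ ℬ, B ⊆ U) → (∀ B ∈ ℬ, ∀ A : Finset α, A ⊆ B → A ∈ ℬ) →
    Pairs (if Even ℬ.card then ℬ else ℬ.erase ∅) := by
  classical
  induction U using Finset.induction_on with
  | empty =>
    intro ℬ hU hdown
    have hsub : ℬ ⊆ {∅} := fun B hB => mem_singleton.2 (subset_empty.1 (hU B hB))
    rcases Finset.subset_singleton_iff.1 hsub with rfl | rfl
    · rw [if_pos (by simp)]
      exact pairs_empty
    · rw [if_neg (by simp)]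
      have : ({∅} : Finset (Finset α)).erase ∅ = ∅ := by simp
      rw [this]
      exact pairs_empty
  | @insert x U₀ hxU IH =>
    intro ℬ hU hdown
    set W : Finset (Finset α) := ℬ.filter (fun A => x ∉ A) with hWdef
    set T : Finset (Finset α) := ℬ.filter (fun A => x ∉ A ∧ insert x A ∈ ℬ) with hTdef
    have hWB : W ⊆ ℬ := filter_subset _ _
    have hTW : T ⊆ W := by
      intro A hA
      obtain ⟨h1, h2, _⟩ := mem_filter.1 hA
      exact mem_filter.2 ⟨h1, h2⟩
    have hxW : ∀ A ∈ W, x ∉ A := fun A hA => (mem_filter.1 hA).2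
    have hWU : ∀ B ∈ W, B ⊆ U₀ := by
      intro B hB a haB
      obtain ⟨h1, h2⟩ := mem_filter.1 hB
      rcases mem_insert.1 (hU B h1 haB) with rfl | h
      · exact absurd haB h2
      · exact h
    have hWdown : ∀ B ∈ W, ∀ A : Finset α, A ⊆ B → A ∈ W := by
      intro B hB A hAB
      obtain ⟨h1, h2⟩ := mem_filter.1 hB
      exact mem_filter.2 ⟨hdown B h1 A hAB, fun hx => h2 (hAB hx)⟩
    have hTU : ∀ B ∈ T, B ⊆ U₀ := fun B hB => hWU B (hTW hB)
    have hTdown : ∀ B ∈ T, ∀ A : Finset α, A ⊆ B → A ∈ T := by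
      intro B hB A hAB
      obtain ⟨h1, h2, h3⟩ := mem_filter.1 hB
      exact mem_filter.2 ⟨hdown B h1 A hAB, fun hx => h2 (hAB hx),
        hdown _ h3 _ (insert_subset_insert x hAB)⟩
    have PW := IH W hWU hWdown
    have PT := IH T hTU hTdown
    have hboard : board x W T = ℬ := by
      ext S
      rw [mem_board]
      constructor
      · rintro (h | ⟨B, hB, rfl⟩)
        · exact hWB h
        · exact (mem_filter.1 hB).2.2
      · intro hS
        by_cases hxS : x ∈ S
        · refine Or.inr ⟨S.erase x, mem_filter.2 ⟨hdown S hS _ (erase_subset x S),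
            notMem_erase x S, ?_⟩, insert_erase hxS⟩
          rw [insert_erase hxS]
          exact hS
        · exact Or.inl (mem_filter.2 ⟨hS, hxS⟩)
    have hcard : ℬ.card = W.card + T.card := by
      rw [← hboard]
      unfold board
      rw [card_union_of_disjoint, card_image_of_injOn]
      · intro a ha b hb hab
        exact tag_inj (hxW a (hTW ha)) (hxW b (hTW hb)) hab
      · rw [Finset.disjoint_left]
        rintro a haW haI
        obtain ⟨B, _, rfl⟩ := mem_image.1 haI
        exact hxW _ haW (mem_insert_self x B)
    have hWne : ¬ Even W.card → ∅ ∈ W := by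
      intro h
      have : W.Nonempty := by
        rw [nonempty_iff_ne_empty]
        intro h0
        rw [h0] at h
        simp at h
      obtain ⟨B, hB⟩ := this
      exact hWdown B hB ∅ (empty_subset B)
    have hTne : ¬ Even T.card → ∅ ∈ T := by
      intro h
      have : T.Nonempty := by
        rw [nonempty_iff_ne_empty]
        intro h0
        rw [h0] at h
        simp at h
      obtain ⟨B, hB⟩ := this
      exact hTdown B hB ∅ (empty_subset B)
    by_cases hEW : Even W.card <;> by_cases hET : Even T.card
    · rw [if_pos hEW] at PW
      rw [if_pos hET] at PT
      obtain ⟨f, hf⟩ := PW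
      obtain ⟨g, hg⟩ := PT
      have P := (mega x (W.card + T.card)).1 W T ∅ ∅ f g le_rfl hTW hxW
        (empty_subset _) (empty_subset _) (empty_subset _) (empty_subset _)
        (by rwa [sdiff_empty]) (by rwa [sdiff_empty])
      rw [sdm_self, sdiff_empty, hboard] at P
      rw [if_pos (by rw [hcard]; exact hEW.add hET)]
      exact P
    · rw [if_pos hEW] at PW
      rw [if_neg hET] at PT
      obtain ⟨f, hf⟩ := PW
      obtain ⟨g, hg⟩ := PT
      have h0T : ∅ ∈ T := hTne hET
      have P := (mega x (W.card + T.card)).1 W T ∅ {∅} f g le_rfl hTW hxW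
        (empty_subset _) (empty_subset _) (Finset.Subset.refl _)
        (singleton_subset_iff.2 h0T)
        (by rwa [sdiff_empty]) (by rwa [← erase_eq])
      rw [sdm_empty_left, hboard] at P
      rw [if_neg (by rw [hcard, Nat.even_add]; tauto)]
      rw [erase_eq]
      exact P
    · rw [if_neg hEW] at PW
      rw [if_pos hET] at PT
      obtain ⟨f, hf⟩ := PW
      obtain ⟨g, hg⟩ := PT
      have h0W : ∅ ∈ W := hWne hEW
      have P := (mega x (W.card + T.card)).1 W T {∅} ∅ f g le_rfl hTW hxW
        (Finset.Subset.refl _) (singleton_subset_iff.2 h0W)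
        (empty_subset _) (empty_subset _)
        (by rwa [← erase_eq]) (by rwa [sdiff_empty])
      rw [sdm_empty_right, hboard] at P
      rw [if_neg (by rw [hcard, Nat.even_add]; tauto)]
      rw [erase_eq]
      exact P
    · rw [if_neg hEW] at PW
      rw [if_neg hET] at PT
      obtain ⟨f, hf⟩ := PW
      obtain ⟨g, hg⟩ := PT
      have h0W : ∅ ∈ W := hWne hEW
      have h0T : ∅ ∈ T := hTne hET
      have P := (mega x (W.card + T.card)).1 W T {∅} {∅} f g le_rfl hTW hxW
        (Finset.Subset.refl _) (singleton_subset_iff.2 h0W)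
        (Finset.Subset.refl _) (singleton_subset_iff.2 h0T)
        (by rwa [← erase_eq]) (by rwa [← erase_eq])
      rw [sdm_self, sdiff_empty, hboard] at P
      rw [if_pos (by rw [hcard, Nat.even_add]; tauto)]
      exact P

/-- Berge's theorem: for a down-set `ℬ`, the Kneser graph on `ℬ` (if `|ℬ|` is
even) or on `ℬ \ {∅}` (if `|ℬ|` is odd) has a perfect matching, phrased via a
fixed-point-free involution pairing disjoint sets. -/
theorem stmt_2 (n : ℕ) (ℬ : Finset (Finset (Fin n)))
    (hdown : ∀ B ∈ ℬ, ∀ A : Finset (Fin n), A ⊆ B → A ∈ ℬ) :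
    ∃ f : Finset (Fin n) → Finset (Fin n),
      ∀ A ∈ (if Even ℬ.card then ℬ else ℬ.erase ∅),
        f A ∈ (if Even ℬ.card then ℬ else ℬ.erase ∅) ∧
        f (f A) = A ∧ f A ≠ A ∧ A ∩ f A = ∅ := by
  have := berge_main (Finset.univ : Finset (Fin n)) ℬ (fun B _ => subset_univ B) hdown
  obtain ⟨f, hf⟩ := this
  exact ⟨f, hf⟩
end

section
/- Let ℱ and 𝒢 be down-sets of subsets of [n] = {1,...,n} with |ℱ| ≤ |𝒢|. Then there exists an injective map φ : ℱ → 𝒢 such that A ∩ φ(A) = ∅ for every A ∈ ℱ. -/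
/-- If `ℱ` and `𝒢` are down-sets with `|ℱ| ≤ |𝒢|`, then there is an injective
map `φ : ℱ → 𝒢` matching each set of `ℱ` to a disjoint set of `𝒢`. -/
theorem stmt_3 (n : ℕ) (ℱ 𝒢 : Finset (Finset (Fin n)))
    (hFdown : ∀ B ∈ ℱ, ∀ A : Finset (Fin n), A ⊆ B → A ∈ ℱ)
    (hGdown : ∀ B ∈ 𝒢, ∀ A : Finset (Fin n), A ⊆ B → A ∈ 𝒢)
    (hcard : ℱ.card ≤ 𝒢.card) :
    ∃ φ : Finset (Fin n) → Finset (Fin n),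
      Set.InjOn φ ↑ℱ ∧ ∀ A ∈ ℱ, φ A ∈ 𝒢 ∧ A ∩ φ A = ∅ := by
  classical
  -- the neighborhoods
  set r : {A // A ∈ ℱ} → Finset (Finset (Fin n)) :=
    fun A => 𝒢.filter (fun B => A.1 ∩ B = ∅) with hr
  have hG_lower : IsLowerSet (↑𝒢 : Set (Finset (Fin n))) := by
    intro a b hba ha
    exact hGdown a ha b hba
  -- Hall's condition
  have hall : ∀ s : Finset {A // A ∈ ℱ}, s.card ≤ (s.biUnion r).card := by
    intro s
    set S : Finset (Finset (Fin n)) := s.image Subtype.val with hS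
    have hScard : S.card = s.card := Finset.card_image_of_injective _ Subtype.val_injective
    set 𝒟 : Finset (Finset (Fin n)) :=
      Finset.univ.filter (fun B => ∃ A ∈ S, A ∩ B = ∅) with hD
    have hD_lower : IsLowerSet (↑𝒟 : Set (Finset (Fin n))) := by
      intro a b hba ha
      simp only [hD, Finset.coe_filter, Set.mem_setOf_eq, Finset.mem_univ, true_and] at ha ⊢
      obtain ⟨A, hA, hAa⟩ := ha
      exact ⟨A, hA, Finset.subset_empty.1
        (hAa ▸ Finset.inter_subset_inter (Finset.Subset.refl _) hba)⟩
    set 𝒰 : Finset (Finset (Fin n)) := ℱ.image compl with hU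
    have hUmem : ∀ C : Finset (Fin n), C ∈ 𝒰 ↔ Cᶜ ∈ ℱ := by
      intro C
      simp only [hU, Finset.mem_image]
      constructor
      · rintro ⟨D, hD, rfl⟩; simpa using hD
      · intro h; exact ⟨Cᶜ, h, by simp⟩
    have hU_upper : IsUpperSet (↑𝒰 : Set (Finset (Fin n))) := by
      intro a b hab ha
      simp only [Finset.mem_coe, hUmem] at ha ⊢
      exact hFdown _ ha _ (Finset.compl_subset_compl.2 hab)
    have hUcard : 𝒰.card = ℱ.card :=
      Finset.card_image_of_injective _ compl_injective
    -- biUnion = 𝒢 ∩ 𝒟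
    have hbU : s.biUnion r = 𝒢 ∩ 𝒟 := by
      ext B
      simp only [Finset.mem_biUnion, hr, Finset.mem_filter, Finset.mem_inter, hD,
        Finset.mem_univ, true_and, hS, Finset.mem_image]
      constructor
      · rintro ⟨A, hA, hBG, hAB⟩
        exact ⟨hBG, A.1, ⟨A, hA, rfl⟩, hAB⟩
      · rintro ⟨hBG, A, ⟨A', hA', rfl⟩, hAB⟩
        exact ⟨A', hA', hBG, hAB⟩
    -- S injects into 𝒰 ∩ 𝒟 via complement
    have hinj : S.card ≤ (𝒰 ∩ 𝒟).card := by
      apply Finset.card_le_card_of_injOn compl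
      · intro A hA
        have hAF : A ∈ ℱ := by
          obtain ⟨A', _, rfl⟩ := Finset.mem_image.1 hA
          exact A'.2
        refine Finset.mem_inter.2 ⟨(hUmem _).2 (by simpa using hAF), ?_⟩
        simp only [hD, Finset.mem_filter, Finset.mem_univ, true_and]
        exact ⟨A, hA, by simp⟩
      · intro a _ b _ hab
        exact compl_injective hab
    -- Harris-Kleitman chain
    have h1 : 2 ^ n * (𝒰 ∩ 𝒟).card ≤ 𝒰.card * 𝒟.card := by
      have := hU_upper.card_inter_le_finset hD_lower
      simpa using this
    have h2 : 𝒢.card * 𝒟.card ≤ 2 ^ n * (𝒢 ∩ 𝒟).card := by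
      have := hG_lower.le_card_inter_finset hD_lower
      simpa using this
    have key : 2 ^ n * S.card ≤ 2 ^ n * (𝒢 ∩ 𝒟).card :=
      calc 2 ^ n * S.card ≤ 2 ^ n * (𝒰 ∩ 𝒟).card := by
            exact Nat.mul_le_mul_left _ hinj
        _ ≤ 𝒰.card * 𝒟.card := h1
        _ = ℱ.card * 𝒟.card := by rw [hUcard]
        _ ≤ 𝒢.card * 𝒟.card := Nat.mul_le_mul_right _ hcard
        _ ≤ 2 ^ n * (𝒢 ∩ 𝒟).card := h2
    have : S.card ≤ (𝒢 ∩ 𝒟).card :=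
      Nat.le_of_mul_le_mul_left key (by positivity)
    rw [hbU]
    omega
  obtain ⟨f, hfinj, hf⟩ :=
    (Finset.all_card_le_biUnion_card_iff_exists_injective r).1 hall
  refine ⟨fun A => if h : A ∈ ℱ then f ⟨A, h⟩ else ∅, ?_, ?_⟩
  · intro A hA B hB hAB
    simp only [Finset.mem_coe] at hA hB
    simp only [dif_pos hA, dif_pos hB] at hAB
    have := hfinj hAB
    exact Subtype.ext_iff.1 this
  · intro A hA
    have := hf ⟨A, hA⟩
    simp only [hr, Finset.mem_filter] at this
    simp only [dif_pos hA]
    exact this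
end

section
/- Let f, g : 2^[n] → ℕ be monotone decreasing functions (i.e., A ⊆ B implies f(B) ≤ f(A) and g(B) ≤ g(A)) with ∑_{X ⊆ [n]} f(X) ≤ ∑_{X ⊆ [n]} g(X). Then there exists a function p : 2^[n] × 2^[n] → ℕ such that: (i) p(X,Y) ≠ 0 only if X ∩ Y = ∅; (ii) ∑_{X,Y ⊆ [n]} p(X,Y) = ∑_{X ⊆ [n]} f(X); (iii) for every Y ⊆ [n] one has ∑_{X ⊆ [n]} p(X,Y) ≤ g(Y), and for every X ⊆ [n] one has ∑_{Y ⊆ [n]} p(X,Y) = f(X). -/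
/-!
Split every set `X` into `f X` copies and every `Y` into `g Y` copies, and join copies of
disjoint sets; a matching saturating the copies of the `X`s is the required `p`. By Hall's
theorem it suffices that `∑_{X ∈ T} f X ≤ ∑_{Y ∈ N} g Y` for every family `T`, where `N` is the
family of sets disjoint from some member of `T`. `N` is a down-set containing the complements of
the members of `T`, and by Harris' inequality a down-set carries at least its share of the
decreasing `g` and at most its share of the increasing `Y ↦ f Yᶜ`, whose total is that of `f`.
Hence `∑_T f ≤ ∑_{Y ∈ N} f Yᶜ ≤ ∑_N g`.
-/

open Finset

section Harris

variable {α : Type*} [DistribLattice α] [Fintype α] {𝒟 : Finset α}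

lemma IsLowerSet.card_mul_sum_le_of_antitone (h𝒟 : IsLowerSet (𝒟 : Set α)) {h : α → ℕ}
    (hh : Antitone h) :
    #𝒟 * ∑ a, h a ≤ Fintype.card α * ∑ a ∈ 𝒟, h a := by
  classical
  let u : α → ℕ := fun a => if a ∈ 𝒟 then 1 else 0
  have := fkg (α := αᵒᵈ) (μ := 1) (f := u ∘ OrderDual.ofDual) (g := h ∘ OrderDual.ofDual)
    (fun _ => zero_le_one) (fun _ => Nat.zero_le _) (fun _ => Nat.zero_le _)
    (fun a b hab => by
      simp only [u, Function.comp_apply]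
      split_ifs with ha hb
      exacts [le_rfl, absurd (h𝒟 hab ha) hb, zero_le_one, le_rfl])
    hh.dual_left (fun _ _ => le_rfl)
  simp only [Pi.one_apply, one_mul, Function.comp_apply, sum_const, card_univ, smul_eq_mul,
    mul_one, OrderDual.ofDual.sum_comp (fun a => u a * h a), OrderDual.ofDual.sum_comp u,
    OrderDual.ofDual.sum_comp h, Fintype.card_orderDual] at this
  simpa only [u, ite_mul, one_mul, zero_mul, sum_ite_mem, univ_inter, sum_const, smul_eq_mul,
    mul_one] using this

lemma IsLowerSet.card_mul_sum_le_of_monotone (h𝒟 : IsLowerSet (𝒟 : Set α)) {h : α → ℕ}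
    (hh : Monotone h) :
    Fintype.card α * ∑ a ∈ 𝒟, h a ≤ #𝒟 * ∑ a, h a := by
  classical
  have := fkg (μ := 1) (f := fun a => if a ∈ 𝒟ᶜ then 1 else 0) (g := h)
    (fun _ => zero_le_one) (fun _ => Nat.zero_le _) (fun _ => Nat.zero_le _)
    (fun a b hab => by
      dsimp only
      split_ifs with ha hb
      exacts [le_rfl, absurd (h𝒟 hab (by simpa using hb)) (by simpa using ha), zero_le_one, le_rfl])
    hh (fun _ _ => le_rfl)
  simp only [Pi.one_apply, one_mul, ite_mul, zero_mul, sum_ite_mem, univ_inter, sum_const,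
    card_univ, smul_eq_mul, mul_one] at this
  rw [← sum_compl_add_sum 𝒟, ← card_compl_add_card 𝒟] at this ⊢
  nlinarith

end Harris

section Disjointness

variable {α : Type*} [BooleanAlgebra α] [Fintype α] {f g : α → ℕ}

lemma IsLowerSet.sum_comp_compl_le_sum (hf : Antitone f) (hg : Antitone g)
    (hfg : ∑ a, f a ≤ ∑ a, g a) {𝒟 : Finset α} (h𝒟 : IsLowerSet (𝒟 : Set α)) :
    ∑ a ∈ 𝒟, f aᶜ ≤ ∑ a ∈ 𝒟, g a := by
  have hsum_compl : ∑ a, f aᶜ = ∑ a, f a := (Equiv.sum_comp (OrderIso.compl α).toEquiv f :)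
  refine le_of_mul_le_mul_left ?_ (Fintype.card_pos (α := α))
  calc Fintype.card α * ∑ a ∈ 𝒟, f aᶜ
      ≤ #𝒟 * ∑ a, f aᶜ := h𝒟.card_mul_sum_le_of_monotone fun a b hab => hf (compl_le_compl hab)
    _ ≤ #𝒟 * ∑ a, g a := by rw [hsum_compl]; gcongr
    _ ≤ Fintype.card α * ∑ a ∈ 𝒟, g a := h𝒟.card_mul_sum_le_of_antitone hg

lemma sum_le_sum_filter_exists_disjoint [DecidableRel (α := α) Disjoint] (hf : Antitone f)
    (hg : Antitone g) (hfg : ∑ a, f a ≤ ∑ a, g a) (s : Finset α) :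
    ∑ a ∈ s, f a ≤ ∑ b with ∃ a ∈ s, Disjoint a b, g b := by
  classical
  have hlower : IsLowerSet (({b | ∃ a ∈ s, Disjoint a b} : Finset α) : Set α) := by
    intro b c hcb hb
    simp only [coe_filter, mem_univ, true_and, Set.mem_ofPred_eq] at hb ⊢
    obtain ⟨a, ha, hab⟩ := hb
    exact ⟨a, ha, hab.mono_right hcb⟩
  calc ∑ a ∈ s, f a = ∑ a ∈ s.image compl, f aᶜ := by
        rw [sum_image fun a _ b _ h => compl_injective h]; simp only [compl_compl]
    _ ≤ ∑ b with ∃ a ∈ s, Disjoint a b, f bᶜ := by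
        refine sum_le_sum_of_subset fun b hb => ?_
        obtain ⟨a, ha, rfl⟩ := mem_image.mp hb
        simpa using ⟨a, ha, disjoint_compl_right⟩
    _ ≤ ∑ b with ∃ a ∈ s, Disjoint a b, g b := hlower.sum_comp_compl_le_sum hf hg hfg

end Disjointness

section WeightedHall

variable {α β : Type*} [Fintype α] [Fintype β]

lemma card_filter_sigma_fst_mem [DecidableEq α] (f : α → ℕ) (s : Finset α) :
    #{x : Σ a, Fin (f a) | x.1 ∈ s} = ∑ a ∈ s, f a := by
  rw [show ({x : Σ a, Fin (f a) | x.1 ∈ s} : Finset _) = s.sigma fun _ => univ by ext; simp,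
    card_sigma]
  simp

theorem exists_weighted_matching_of_hall (r : α → β → Prop) [DecidableRel r] (f : α → ℕ)
    (g : β → ℕ) (hall : ∀ s : Finset α, ∑ a ∈ s, f a ≤ ∑ b with ∃ a ∈ s, r a b, g b) :
    ∃ p : α → β → ℕ, (∀ a b, p a b ≠ 0 → r a b) ∧ (∀ b, ∑ a, p a b ≤ g b) ∧
      ∀ a, ∑ b, p a b = f a := by
  classical
  have hall_copies (A : Finset (Σ a, Fin (f a))) :
      #A ≤ #{y : Σ b, Fin (g b) | ∃ x ∈ A, r x.1 y.1} :=
    calc #A ≤ #{x : Σ a, Fin (f a) | x.1 ∈ A.image Sigma.fst} :=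
          card_le_card fun x hx => by simpa using ⟨x.2, hx⟩
      _ = ∑ a ∈ A.image Sigma.fst, f a := card_filter_sigma_fst_mem f _
      _ ≤ ∑ b with ∃ a ∈ A.image Sigma.fst, r a b, g b := hall _
      _ = #{y : Σ b, Fin (g b) | ∃ x ∈ A, r x.1 y.1} := by
          rw [← card_filter_sigma_fst_mem]; congr 1; ext; simp
  obtain ⟨F, hFinj, hF⟩ :=
    (Fintype.all_card_le_filter_rel_iff_exists_injective _).mp hall_copies
  refine ⟨fun a b => #{i : Fin (f a) | (F ⟨a, i⟩).1 = b}, fun a b hab => ?_, fun b => ?_,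
    fun a => ?_⟩
  · obtain ⟨i, hi⟩ := card_ne_zero.mp hab
    exact (mem_filter.mp hi).2 ▸ hF ⟨a, i⟩
  · calc ∑ a, #{i : Fin (f a) | (F ⟨a, i⟩).1 = b}
        = #(univ.sigma fun a => {i : Fin (f a) | (F ⟨a, i⟩).1 = b}) := (card_sigma _ _).symm
      _ ≤ #{y : Σ b, Fin (g b) | y.1 ∈ ({b} : Finset β)} :=
          card_le_card_of_injOn F (fun x hx => by simp_all) hFinj.injOn
      _ = g b := by rw [card_filter_sigma_fst_mem, sum_singleton]
  · rw [← card_eq_sum_card_fiberwise (f := fun i : Fin (f a) => (F ⟨a, i⟩).1) (t := univ)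
      fun i _ => mem_univ _, card_univ, Fintype.card_fin]

end WeightedHall

/-- Weighted matching version: given monotone decreasing `f g : 2^[n] → ℕ` with
`|f| ≤ |g|`, there is a weighted matching `p` supported on pairs of disjoint
sets with `|p| = |f|`, column sums at most `g` and row sums equal to `f`. -/
theorem stmt_4 (n : ℕ) (f g : Finset (Fin n) → ℕ)
    (hf : ∀ A B : Finset (Fin n), A ⊆ B → f B ≤ f A)
    (hg : ∀ A B : Finset (Fin n), A ⊆ B → g B ≤ g A)
    (hsum : ∑ X : Finset (Fin n), f X ≤ ∑ X : Finset (Fin n), g X) :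
    ∃ p : Finset (Fin n) → Finset (Fin n) → ℕ,
      (∀ X Y : Finset (Fin n), p X Y ≠ 0 → X ∩ Y = ∅) ∧
      (∑ X : Finset (Fin n), ∑ Y : Finset (Fin n), p X Y = ∑ X : Finset (Fin n), f X) ∧
      (∀ Y : Finset (Fin n), ∑ X : Finset (Fin n), p X Y ≤ g Y) ∧
      (∀ X : Finset (Fin n), ∑ Y : Finset (Fin n), p X Y = f X) := by
  obtain ⟨p, hdisj, hcol, hrow⟩ := exists_weighted_matching_of_hall Disjoint f g
    (sum_le_sum_filter_exists_disjoint (fun A B => hf A B) (fun A B => hg A B) hsum)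
  exact ⟨p, fun X Y h => disjoint_iff_inter_eq_empty.mp (hdisj X Y h),
    sum_congr rfl fun X _ => hrow X, hcol, hrow⟩
end

section
/- If ℱ and 𝒢 are families of subsets of [n] = {1,...,n} that are cross-intersecting, then |ℱ| + |𝒢| ≤ max(|ℱ↓|, |𝒢↓|), where ℱ↓ denotes the down-closure of ℱ. -/
open FinsetFamily

/-- If `ℱ, 𝒢` are cross-intersecting families of subsets of `[n]`, then
`|ℱ| + |𝒢| ≤ max (|ℱ↓|, |𝒢↓|)` where `↓` denotes down-closure. -/
theorem stmt_5 (n : ℕ) (ℱ 𝒢 : Finset (Finset (Fin n)))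
    (hcross : ∀ A ∈ ℱ, ∀ B ∈ 𝒢, A ∩ B ≠ ∅) :
    ℱ.card + 𝒢.card ≤
      max ((Finset.univ.filter (fun G : Finset (Fin n) => ∃ F ∈ ℱ, G ⊆ F)).card)
          ((Finset.univ.filter (fun G : Finset (Fin n) => ∃ F ∈ 𝒢, G ⊆ F)).card) := by
  classical
  set Fd := Finset.univ.filter (fun G : Finset (Fin n) => ∃ F ∈ ℱ, G ⊆ F) with hFd
  set Gd := Finset.univ.filter (fun G : Finset (Fin n) => ∃ F ∈ 𝒢, G ⊆ F) with hGd
  have hFsub : ℱ ⊆ Fd := by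
    intro A hA
    simp only [hFd, Finset.mem_filter, Finset.mem_univ, true_and]
    exact ⟨A, hA, le_refl A⟩
  have hGsub : 𝒢 ⊆ Gd := by
    intro B hB
    simp only [hGd, Finset.mem_filter, Finset.mem_univ, true_and]
    exact ⟨B, hB, le_refl B⟩
  rcases Finset.eq_empty_or_nonempty ℱ with hF | hF
  · subst hF
    simp only [Finset.card_empty, zero_add]
    exact le_max_of_le_right (Finset.card_le_card hGsub)
  rcases Finset.eq_empty_or_nonempty 𝒢 with hG | hG
  · subst hG
    simp only [Finset.card_empty, add_zero]
    exact le_max_of_le_left (Finset.card_le_card hFsub)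
  by_contra hcon
  push_neg at hcon
  rw [max_lt_iff] at hcon
  obtain ⟨h1, h2⟩ := hcon
  -- ℱ \\ 𝒢 lands in Fd \ ℱ
  have hS : (ℱ \\ 𝒢) ∪ ℱ ⊆ Fd := by
    intro X hX
    rcases Finset.mem_union.1 hX with hX | hX
    · rw [Finset.mem_diffs] at hX
      obtain ⟨A, hA, B, hB, rfl⟩ := hX
      simp only [hFd, Finset.mem_filter, Finset.mem_univ, true_and]
      exact ⟨A, hA, Finset.sdiff_subset⟩
    · exact hFsub hX
  have hSdisj : Disjoint (ℱ \\ 𝒢) ℱ := by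
    rw [Finset.disjoint_left]
    intro X hX hXF
    rw [Finset.mem_diffs] at hX
    obtain ⟨A, hA, B, hB, rfl⟩ := hX
    exact hcross _ hXF B hB (Finset.sdiff_inter_self B A)
  have hT : (𝒢 \\ ℱ) ∪ 𝒢 ⊆ Gd := by
    intro X hX
    rcases Finset.mem_union.1 hX with hX | hX
    · rw [Finset.mem_diffs] at hX
      obtain ⟨B, hB, A, hA, rfl⟩ := hX
      simp only [hGd, Finset.mem_filter, Finset.mem_univ, true_and]
      exact ⟨B, hB, Finset.sdiff_subset⟩
    · exact hGsub hX
  have hTdisj : Disjoint (𝒢 \\ ℱ) 𝒢 := by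
    rw [Finset.disjoint_left]
    intro X hX hXG
    rw [Finset.mem_diffs] at hX
    obtain ⟨B, hB, A, hA, rfl⟩ := hX
    exact hcross A hA _ hXG (by rw [Finset.inter_comm]; exact Finset.sdiff_inter_self A B)
  have hScard : (ℱ \\ 𝒢).card + ℱ.card ≤ Fd.card := by
    rw [← Finset.card_union_of_disjoint hSdisj]
    exact Finset.card_le_card hS
  have hTcard : (𝒢 \\ ℱ).card + 𝒢.card ≤ Gd.card := by
    rw [← Finset.card_union_of_disjoint hTdisj]
    exact Finset.card_le_card hT
  have hAD : ℱ.card * 𝒢.card ≤ (ℱ \\ 𝒢).card * (𝒢 \\ ℱ).card :=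
    Finset.le_card_diffs_mul_card_diffs ℱ 𝒢
  have hFpos : 0 < ℱ.card := Finset.card_pos.2 hF
  have hGpos : 0 < 𝒢.card := Finset.card_pos.2 hG
  have hx : (ℱ \\ 𝒢).card < 𝒢.card := by omega
  have hy : (𝒢 \\ ℱ).card < ℱ.card := by omega
  nlinarith [hAD, hx, hy, hFpos, hGpos]
end

section
/- Let n ≥ 1 and let ℱ and 𝒢 be families of subsets of [n] = {1,...,n} that are cross-intersecting, and suppose both ℱ and 𝒢 are union families. Then |ℱ| + |𝒢| ≤ 2^(n-1). -/
open Finset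


private lemma aux_pair {p q : Prop} [Decidable p] [Decidable q] (h : ¬(p ∧ q)) :
    (if p then (1 : ℕ) else 0) + (if q then 1 else 0) ≤ 1 := by
  split_ifs <;> first | omega | tauto

private lemma aux_imp {p q r : Prop} [Decidable p] [Decidable q] [Decidable r]
    (h : p → q → r) :
    (if p then (1 : ℕ) else 0) + (if q then 1 else 0) ≤ 1 + (if r then 1 else 0) := by
  split_ifs <;> first | omega | tauto

set_option maxHeartbeats 1000000 in
/-- If `ℱ, 𝒢` are cross-intersecting families of subsets of `[n]`, both of
which are union families, then `|ℱ| + |𝒢| ≤ 2^(n-1)`. -/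
theorem stmt_6 (n : ℕ) (hn : 1 ≤ n) (ℱ 𝒢 : Finset (Finset (Fin n)))
    (hcross : ∀ A ∈ ℱ, ∀ B ∈ 𝒢, A ∩ B ≠ ∅)
    (hFunion : ∀ A ∈ ℱ, ∀ B ∈ ℱ, A ∪ B ≠ Finset.univ)
    (hGunion : ∀ A ∈ 𝒢, ∀ B ∈ 𝒢, A ∪ B ≠ Finset.univ) :
    ℱ.card + 𝒢.card ≤ 2 ^ (n - 1) := by
  classical
  set 𝒟 : Finset (Finset (Fin n)) := ℱ ∩ 𝒢 with h𝒟
  set Δ : Finset (Finset (Fin n)) := Finset.diffs 𝒟 𝒟 with hΔ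
  have hunivc : ∀ S : Finset (Fin n), S ∪ Sᶜ = Finset.univ := fun S => Finset.union_compl S
  have hΔfacts : ∀ S : Finset (Fin n), S ∈ Δ →
      S ∉ ℱ ∧ S ∉ 𝒢 ∧ Sᶜ ∉ ℱ ∧ Sᶜ ∉ 𝒢 := by
    intro S hS
    rw [hΔ, Finset.mem_diffs] at hS
    obtain ⟨D₁, hD₁, D₂, hD₂, rfl⟩ := hS
    obtain ⟨hD₁F, hD₁G⟩ := Finset.mem_inter.1 hD₁
    obtain ⟨hD₂F, hD₂G⟩ := Finset.mem_inter.1 hD₂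
    have h1 : (D₁ \ D₂) ∩ D₂ = ∅ := Finset.sdiff_inter_self _ _
    have h1' : D₂ ∩ (D₁ \ D₂) = ∅ := by rwa [Finset.inter_comm]
    have h2 : (D₁ \ D₂)ᶜ ∪ D₁ = Finset.univ := by
      ext x
      simp only [Finset.mem_union, Finset.mem_compl, Finset.mem_sdiff, Finset.mem_univ, iff_true]
      tauto
    exact ⟨fun h => hcross _ h _ hD₂G h1,
           fun h => hcross _ hD₂F _ h h1',
           fun h => hFunion _ h _ hD₁F h2,
           fun h => hGunion _ h _ hD₁G h2⟩
  have hΔpair : ∀ S : Finset (Fin n), S ∈ Δ → Sᶜ ∈ Δ → False := by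
    intro S hS hSc
    rw [hΔ, Finset.mem_diffs] at hS hSc
    obtain ⟨D₁, hD₁, D₂, _, rfl⟩ := hS
    obtain ⟨D₃, hD₃, D₄, _, hEq⟩ := hSc
    have hD₁F : D₁ ∈ ℱ := (Finset.mem_inter.1 hD₁).1
    have hD₃F : D₃ ∈ ℱ := (Finset.mem_inter.1 hD₃).1
    apply hFunion _ hD₁F _ hD₃F
    apply Finset.eq_univ_of_forall
    intro x
    have := hunivc (D₁ \ D₂)
    rw [← hEq] at this
    have hx : x ∈ (D₁ \ D₂) ∪ D₃ \ D₄ := by rw [this]; exact Finset.mem_univ x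
    rcases Finset.mem_union.1 hx with h | h
    · exact Finset.mem_union_left _ (Finset.sdiff_subset h)
    · exact Finset.mem_union_right _ (Finset.sdiff_subset h)
  have main : ∀ S : Finset (Fin n),
      ((if S ∈ ℱ then 1 else 0) + (if S ∈ 𝒢 then 1 else 0) +
       (if Sᶜ ∈ ℱ then 1 else 0) + (if Sᶜ ∈ 𝒢 then 1 else 0) +
       (if S ∈ Δ then 1 else 0) + (if Sᶜ ∈ Δ then 1 else 0) : ℕ)
      ≤ 1 + (if S ∈ 𝒟 then 1 else 0) + (if Sᶜ ∈ 𝒟 then 1 else 0) := by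
    intro S
    have a : ¬(S ∈ ℱ ∧ Sᶜ ∈ ℱ) := fun ⟨h1, h2⟩ => hFunion _ h1 _ h2 (hunivc S)
    have b : ¬(S ∈ 𝒢 ∧ Sᶜ ∈ 𝒢) := fun ⟨h1, h2⟩ => hGunion _ h1 _ h2 (hunivc S)
    have c : ¬(S ∈ ℱ ∧ Sᶜ ∈ 𝒢) := fun ⟨h1, h2⟩ => hcross _ h1 _ h2 (Finset.inter_compl S)
    have d : ¬(Sᶜ ∈ ℱ ∧ S ∈ 𝒢) := fun ⟨h1, h2⟩ => hcross _ h1 _ h2 (by rw [Finset.inter_comm]; exact Finset.inter_compl S)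
    have e := hΔfacts S
    have f' := hΔfacts Sᶜ
    rw [compl_compl] at f'
    have g := hΔpair S
    have A1 := aux_pair a
    have A2 := aux_pair b
    have A3 := aux_pair c
    have A4 := aux_pair d
    have G1 := aux_pair (fun hpq => g hpq.1 hpq.2 : ¬(S ∈ Δ ∧ Sᶜ ∈ Δ))
    have D1 : (if S ∈ ℱ then (1 : ℕ) else 0) + (if S ∈ 𝒢 then 1 else 0) ≤
        1 + (if S ∈ 𝒟 then 1 else 0) :=
      aux_imp (fun h1 h2 => Finset.mem_inter.2 ⟨h1, h2⟩)
    have D2 : (if Sᶜ ∈ ℱ then (1 : ℕ) else 0) + (if Sᶜ ∈ 𝒢 then 1 else 0) ≤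
        1 + (if Sᶜ ∈ 𝒟 then 1 else 0) :=
      aux_imp (fun h1 h2 => Finset.mem_inter.2 ⟨h1, h2⟩)
    have E1 : (if S ∈ ℱ then (1 : ℕ) else 0) + (if S ∈ 𝒢 then 1 else 0) +
        (if Sᶜ ∈ ℱ then 1 else 0) + (if Sᶜ ∈ 𝒢 then 1 else 0) +
        2 * (if S ∈ Δ then 1 else 0) ≤ 2 := by
      by_cases hS : S ∈ Δ
      · obtain ⟨n1, n2, n3, n4⟩ := e hS
        simp [hS, n1, n2, n3, n4]
      · simp only [if_neg hS, mul_zero, add_zero]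
        omega
    have E2 : (if S ∈ ℱ then (1 : ℕ) else 0) + (if S ∈ 𝒢 then 1 else 0) +
        (if Sᶜ ∈ ℱ then 1 else 0) + (if Sᶜ ∈ 𝒢 then 1 else 0) +
        2 * (if Sᶜ ∈ Δ then 1 else 0) ≤ 2 := by
      by_cases hS : Sᶜ ∈ Δ
      · obtain ⟨n1, n2, n3, n4⟩ := f' hS
        simp [hS, n1, n2, n3, n4]
      · simp only [if_neg hS, mul_zero, add_zero]
        omega
    omega
  have sum_le := Finset.sum_le_sum (fun S (_ : S ∈ (Finset.univ : Finset (Finset (Fin n)))) => main S)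
  have count : ∀ t : Finset (Finset (Fin n)),
      ∑ S : Finset (Fin n), (if S ∈ t then (1 : ℕ) else 0) = t.card := by
    intro t
    rw [Finset.sum_ite_mem, Finset.univ_inter, Finset.sum_const, smul_eq_mul, mul_one]
  have countc : ∀ t : Finset (Finset (Fin n)),
      ∑ S : Finset (Fin n), (if Sᶜ ∈ t then (1 : ℕ) else 0) = t.card := by
    intro t
    rw [← count t]
    exact Fintype.sum_bijective compl compl_involutive.bijective _ _ (fun S => rfl)
  rw [Finset.sum_add_distrib, Finset.sum_add_distrib, Finset.sum_add_distrib,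
      Finset.sum_add_distrib, Finset.sum_add_distrib, Finset.sum_add_distrib,
      Finset.sum_add_distrib, count, count, countc, countc, count, countc, count, countc,
      Finset.sum_const, Finset.card_univ, smul_eq_mul, mul_one] at sum_le
  have hcard : Fintype.card (Finset (Fin n)) = 2 ^ n := by
    rw [Fintype.card_finset, Fintype.card_fin]
  rw [hcard] at sum_le
  have hMS : 𝒟.card ≤ Δ.card := Finset.card_le_card_diffs 𝒟
  have h2n : 2 * 2 ^ (n - 1) = 2 ^ n := by
    rw [← pow_succ']
    congr 1
    omega
  omega
end

section
/- Let n ≥ 1 and let ℱ ⊆ 𝒢 be families of subsets of [n] = {1,...,n}, where 𝒢 is a down-set and ℱ is intersecting. Suppose that the covering number of ℱ is at most 2, i.e., there exists a set T ⊆ [n] with |T| ≤ 2 such that T ∩ F ≠ ∅ for every F ∈ ℱ. Then there exists an element x ∈ [n] such that |ℱ| ≤ |{D ∈ 𝒢 : x ∈ D}| (i.e., Chvátal's conjecture |ℱ| ≤ Δ(𝒢) holds). -/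
open Finset FinsetFamily

/-- Chvátal's conjecture for intersecting families with covering number at
most 2: if `𝒢` is a down-set, `ℱ ⊆ 𝒢` is intersecting and has a cover of size
at most 2, then `|ℱ| ≤ Δ(𝒢)`. -/
theorem stmt_7 (n : ℕ) (hn : 1 ≤ n) (ℱ 𝒢 : Finset (Finset (Fin n)))
    (hFG : ℱ ⊆ 𝒢)
    (hdown : ∀ B ∈ 𝒢, ∀ A : Finset (Fin n), A ⊆ B → A ∈ 𝒢)
    (hint : ∀ A ∈ ℱ, ∀ B ∈ ℱ, A ∩ B ≠ ∅)
    (hcov : ∃ T : Finset (Fin n), T.card ≤ 2 ∧ ∀ F ∈ ℱ, T ∩ F ≠ ∅) :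
    ∃ x : Fin n, ℱ.card ≤ (𝒢.filter (fun D => x ∈ D)).card := by
  classical
  by_contra hcon
  push_neg at hcon
  obtain ⟨T, hT2, hTF⟩ := hcov
  have hFne : ℱ.Nonempty := by
    rcases ℱ.eq_empty_or_nonempty with h | h
    · have := hcon ⟨0, hn⟩
      simp [h] at this
    · exact h
  obtain ⟨F₀, hF₀⟩ := hFne
  have hTne : T.Nonempty := by
    rcases T.eq_empty_or_nonempty with h | h
    · exact absurd (by simp [h]) (hTF F₀ hF₀)
    · exact h
  obtain ⟨x, hxT⟩ := hTne
  have hBne : ∃ F ∈ ℱ, x ∉ F := by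
    by_contra hall
    push_neg at hall
    exact absurd (Finset.card_le_card
      (fun F hF => Finset.mem_filter.2 ⟨hFG hF, hall F hF⟩)) (not_le.2 (hcon x))
  obtain ⟨Fb, hFb, hxFb⟩ := hBne
  have hyex : (T ∩ Fb).Nonempty := nonempty_iff_ne_empty.2 (hTF Fb hFb)
  obtain ⟨y, hy⟩ := hyex
  rw [mem_inter] at hy
  have hxy : x ≠ y := fun h => hxFb (h ▸ hy.2)
  have hTeq : T = {x, y} := by
    refine (eq_of_subset_of_card_le ?_ ?_).symm
    · intro t ht
      rcases mem_insert.1 ht with rfl | ht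
      · exact hxT
      · exact (mem_singleton.1 ht) ▸ hy.1
    · calc T.card ≤ 2 := hT2
        _ = ({x, y} : Finset (Fin n)).card := (card_pair hxy).symm
  have hcover : ∀ F ∈ ℱ, x ∈ F ∨ y ∈ F := by
    intro F hF
    obtain ⟨t, ht⟩ := nonempty_iff_ne_empty.2 (hTF F hF)
    rw [mem_inter, hTeq] at ht
    rcases mem_insert.1 ht.1 with rfl | h
    · exact Or.inl ht.2
    · exact Or.inr ((mem_singleton.1 h) ▸ ht.2)
  -- main counting step
  have main : ∀ (z : Fin n) (P : Finset (Finset (Fin n))),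
      P ⊆ ℱ → (∀ G ∈ P, z ∈ G) →
      (P \\ ℱ.filter (fun F => z ∉ F)).card < (ℱ.filter (fun F => z ∉ F)).card := by
    intro z P hPF hPz
    set Q := ℱ.filter (fun F => z ∉ F) with hQ
    have hXsub : P \\ Q ⊆ 𝒢.filter (fun D => z ∈ D) := by
      intro S hS
      obtain ⟨G, hG, F, hF, rfl⟩ := mem_diffs.1 hS
      refine mem_filter.2 ⟨hdown G (hFG (hPF hG)) _ sdiff_subset, ?_⟩
      exact mem_sdiff.2 ⟨hPz G hG, (mem_filter.1 hF).2⟩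
    have hXF : Disjoint (P \\ Q) (ℱ.filter (fun F => z ∈ F)) := by
      rw [disjoint_left]
      intro S hS hSF
      obtain ⟨G, hG, F, hF, rfl⟩ := mem_diffs.1 hS
      have hFℱ : F ∈ ℱ := (mem_filter.1 hF).1
      exact hint _ (mem_filter.1 hSF).1 F hFℱ (Finset.sdiff_inter_self F G)
    have hfil : ℱ.filter (fun F => z ∈ F) ⊆ 𝒢.filter (fun D => z ∈ D) := by
      intro S hS
      exact mem_filter.2 ⟨hFG (mem_filter.1 hS).1, (mem_filter.1 hS).2⟩
    have hunion : (ℱ.filter (fun F => z ∈ F)).card + (P \\ Q).card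
        ≤ (𝒢.filter (fun D => z ∈ D)).card := by
      rw [← card_union_of_disjoint hXF.symm]
      exact card_le_card (union_subset hfil hXsub)
    have hsplit : (ℱ.filter (fun F => z ∈ F)).card + Q.card = ℱ.card := by
      rw [hQ]
      exact card_filter_add_card_filter_not _
    have := hcon z
    omega
  set A := ℱ.filter (fun F => y ∉ F) with hAdef
  set B := ℱ.filter (fun F => x ∉ F) with hBdef
  have hA : ∀ G ∈ A, x ∈ G := by
    intro G hG
    have := mem_filter.1 hG
    exact (hcover G this.1).resolve_right this.2
  have hB : ∀ F ∈ B, y ∈ F := by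
    intro F hF
    have := mem_filter.1 hF
    exact (hcover F this.1).resolve_left this.2
  have h1 : (A \\ B).card < B.card := hBdef ▸ main x A (filter_subset _ _) hA
  have h2 : (B \\ A).card < A.card := hAdef ▸ main y B (filter_subset _ _) hB
  have h3 := le_card_diffs_mul_card_diffs A B
  have h4 : ((A \\ B).card + 1) * ((B \\ A).card + 1) ≤ B.card * A.card :=
    Nat.mul_le_mul h1 h2
  nlinarith [h1, h2, h3, h4]
end

section
/- Let n ≥ 2. If ℱ is an intersecting-union (IU) family of subsets of [n] = {1,...,n}, then |ℱ| ≤ 2^(n-2). -/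
/-!
The upward closure `𝒰` of `ℱ` is still intersecting and its downward closure `𝒟` still has no
two members covering `[n]`; by complementation each therefore has at most `2^(n-1)` members.
Since `𝒰` is an upper set and `𝒟` a lower set, the Harris–Kleitman inequality gives
`2^n |𝒰 ∩ 𝒟| ≤ |𝒰| |𝒟| ≤ 2^(2n-2)`, and `ℱ ⊆ 𝒰 ∩ 𝒟`.
-/

open Finset
open scoped FinsetFamily

variable {β : Type*}

def Set.Cointersecting [SemilatticeSup β] [OrderTop β] (s : Set β) : Prop :=
  ∀ ⦃a⦄, a ∈ s → ∀ ⦃b⦄, b ∈ s → ¬Codisjoint a b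

theorem Set.Cointersecting.intersecting_compls [BooleanAlgebra β] {s : Finset β}
    (hs : (s : Set β).Cointersecting) : (sᶜˢ : Set β).Intersecting := by
  intro a ha b hb hab
  refine hs (mem_compls.1 ha) (mem_compls.1 hb) ?_
  rwa [codisjoint_iff_compl_le_right, compl_compl, le_compl_iff_disjoint_right]

theorem Set.Cointersecting.card_le [BooleanAlgebra β] [Fintype β] {s : Finset β}
    (hs : (s : Set β).Cointersecting) : 2 * #s ≤ Fintype.card β := by
  simpa using hs.intersecting_compls.card_le

section Closure

variable [Preorder β] [Fintype β] [DecidableLE β]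

def upperClosureFinset (s : Finset β) : Finset β := {b | ∃ a ∈ s, a ≤ b}

def lowerClosureFinset (s : Finset β) : Finset β := {b | ∃ a ∈ s, b ≤ a}

@[simp]
theorem mem_upperClosureFinset {s : Finset β} {b : β} :
    b ∈ upperClosureFinset s ↔ ∃ a ∈ s, a ≤ b := by
  simp [upperClosureFinset]

@[simp]
theorem mem_lowerClosureFinset {s : Finset β} {b : β} :
    b ∈ lowerClosureFinset s ↔ ∃ a ∈ s, b ≤ a := by
  simp [lowerClosureFinset]

theorem subset_upperClosureFinset (s : Finset β) : s ⊆ upperClosureFinset s :=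
  fun a ha => mem_upperClosureFinset.2 ⟨a, ha, le_rfl⟩

theorem subset_lowerClosureFinset (s : Finset β) : s ⊆ lowerClosureFinset s :=
  fun a ha => mem_lowerClosureFinset.2 ⟨a, ha, le_rfl⟩

theorem isUpperSet_upperClosureFinset (s : Finset β) :
    IsUpperSet (upperClosureFinset s : Set β) := by
  intro b c hbc hb
  obtain ⟨a, ha, hab⟩ := mem_upperClosureFinset.1 hb
  exact mem_upperClosureFinset.2 ⟨a, ha, hab.trans hbc⟩

theorem isLowerSet_lowerClosureFinset (s : Finset β) :
    IsLowerSet (lowerClosureFinset s : Set β) := by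
  intro b c hcb hb
  obtain ⟨a, ha, hba⟩ := mem_lowerClosureFinset.1 hb
  exact mem_lowerClosureFinset.2 ⟨a, ha, hcb.trans hba⟩

end Closure

theorem Set.Intersecting.upperClosureFinset [SemilatticeInf β] [OrderBot β] [Fintype β]
    [DecidableLE β] {s : Finset β}
    (hs : (s : Set β).Intersecting) : (upperClosureFinset s : Set β).Intersecting := by
  intro b hb c hc hbc
  obtain ⟨a, ha, hab⟩ := mem_upperClosureFinset.1 hb
  obtain ⟨a', ha', hac⟩ := mem_upperClosureFinset.1 hc
  exact hs ha ha' (hbc.mono hab hac)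

theorem Set.Cointersecting.lowerClosureFinset [SemilatticeSup β] [OrderTop β] [Fintype β]
    [DecidableLE β] {s : Finset β}
    (hs : (s : Set β).Cointersecting) : (lowerClosureFinset s : Set β).Cointersecting := by
  intro b hb c hc hbc
  obtain ⟨a, ha, hba⟩ := mem_lowerClosureFinset.1 hb
  obtain ⟨a', ha', hca⟩ := mem_lowerClosureFinset.1 hc
  exact hs ha ha' (hbc.mono hba hca)

theorem four_mul_card_le_of_intersecting_of_cointersecting {α : Type*} [Fintype α]
    [DecidableEq α] {𝒜 : Finset (Finset α)} (h₁ : (𝒜 : Set (Finset α)).Intersecting)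
    (h₂ : (𝒜 : Set (Finset α)).Cointersecting) : 4 * #𝒜 ≤ 2 ^ Fintype.card α := by
  set 𝒰 := upperClosureFinset 𝒜
  set 𝒟 := lowerClosureFinset 𝒜
  have h𝒰 : 2 * #𝒰 ≤ 2 ^ Fintype.card α := by
    simpa using h₁.upperClosureFinset.card_le
  have h𝒟 : 2 * #𝒟 ≤ 2 ^ Fintype.card α := by
    simpa using h₂.lowerClosureFinset.card_le
  have h𝒜 : #𝒜 ≤ #(𝒰 ∩ 𝒟) :=
    card_le_card (subset_inter (subset_upperClosureFinset 𝒜) (subset_lowerClosureFinset 𝒜))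
  have harris_kleitman : 2 ^ Fintype.card α * #(𝒰 ∩ 𝒟) ≤ #𝒰 * #𝒟 :=
    (isUpperSet_upperClosureFinset 𝒜).card_inter_le_finset (isLowerSet_lowerClosureFinset 𝒜)
  refine Nat.le_of_mul_le_mul_left ?_ (pow_pos two_pos (Fintype.card α))
  calc 2 ^ Fintype.card α * (4 * #𝒜)
      ≤ 4 * (2 ^ Fintype.card α * #(𝒰 ∩ 𝒟)) := by rw [mul_left_comm]; gcongr
    _ ≤ 4 * (#𝒰 * #𝒟) := by gcongr
    _ = (2 * #𝒰) * (2 * #𝒟) := by ring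
    _ ≤ 2 ^ Fintype.card α * 2 ^ Fintype.card α := Nat.mul_le_mul h𝒰 h𝒟

theorem stmt_8_general (n : ℕ) (ℱ : Finset (Finset (Fin n)))
    (hIU : ∀ A ∈ ℱ, ∀ B ∈ ℱ, A ∩ B ≠ ∅ ∧ A ∪ B ≠ Finset.univ) :
    ℱ.card ≤ 2 ^ (n - 2) := by
  have hI : (ℱ : Set (Finset (Fin n))).Intersecting := fun A hA B hB hAB =>
    (hIU A hA B hB).1 (disjoint_iff_inter_eq_empty.1 hAB)
  have hU : (ℱ : Set (Finset (Fin n))).Cointersecting := fun A hA B hB hAB =>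
    (hIU A hA B hB).2 (codisjoint_iff.1 hAB)
  have hcard := four_mul_card_le_of_intersecting_of_cointersecting hI hU
  rw [Fintype.card_fin] at hcard
  have hpow : 2 ^ n ≤ 4 * 2 ^ (n - 2) :=
    calc 2 ^ n ≤ 2 ^ (n - 2 + 2) := Nat.pow_le_pow_right two_pos (by omega)
      _ = 4 * 2 ^ (n - 2) := by ring
  omega

/-- An intersecting-union family of subsets of `[n]` has at most `2^(n-2)`
members. -/
theorem stmt_8 (n : ℕ) (hn : 2 ≤ n) (ℱ : Finset (Finset (Fin n)))
    (hIU : ∀ A ∈ ℱ, ∀ B ∈ ℱ, A ∩ B ≠ ∅ ∧ A ∪ B ≠ Finset.univ) :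
    ℱ.card ≤ 2 ^ (n - 2) :=
  stmt_8_general n ℱ hIU
end

section
/- Let n ≥ 2 and let 𝒜 and ℬ be families of subsets of [n] = {1,...,n} that are cross-IU. Then |𝒜| · |ℬ| ≤ 2^(2n-4). -/
open Finset

private lemma four_mul_le_sq (a b : ℕ) : 4 * (a * b) ≤ (a + b) ^ 2 := by nlinarith [sq_nonneg (a - b : ℤ)]; 

/-- If `𝒜, ℬ` are cross-IU families of subsets of `[n]`, then
`|𝒜|·|ℬ| ≤ 2^(2n-4)`. -/
theorem stmt_9 (n : ℕ) (hn : 2 ≤ n) (𝒜 ℬ : Finset (Finset (Fin n)))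
    (hIU : ∀ A ∈ 𝒜, ∀ B ∈ ℬ, A ∩ B ≠ ∅ ∧ A ∪ B ≠ Finset.univ) :
    𝒜.card * ℬ.card ≤ 2 ^ (2 * n - 4) := by
  classical
  set U : Finset (Finset (Fin n)) := univ.filter (fun S => ∃ A ∈ 𝒜, Aᶜ ⊆ S) with hUdef
  set D : Finset (Finset (Fin n)) := univ.filter (fun S => ∃ A ∈ 𝒜, S ⊆ Aᶜ) with hDdef
  have hUup : IsUpperSet (U : Set (Finset (Fin n))) := by
    intro S T hST hS
    simp only [hUdef, coe_filter, Set.mem_setOf_eq, mem_univ, true_and] at hS ⊢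
    obtain ⟨A, hA, h⟩ := hS
    exact ⟨A, hA, h.trans hST⟩
  have hDlow : IsLowerSet (D : Set (Finset (Fin n))) := by
    intro S T hST hS
    simp only [hDdef, coe_filter, Set.mem_setOf_eq, mem_univ, true_and] at hS ⊢
    obtain ⟨A, hA, h⟩ := hS
    exact ⟨A, hA, hST.trans h⟩
  have hUclow : IsLowerSet ((Uᶜ : Finset (Finset (Fin n))) : Set (Finset (Fin n))) := by
    rw [coe_compl]; exact hUup.compl
  have hDcup : IsUpperSet ((Dᶜ : Finset (Finset (Fin n))) : Set (Finset (Fin n))) := by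
    rw [coe_compl]; exact hDlow.compl
  -- |𝒜| ≤ |U ∩ D|
  have hAsub : 𝒜.image compl ⊆ U ∩ D := by
    intro S hS
    obtain ⟨A, hA, rfl⟩ := mem_image.1 hS
    rw [mem_inter, hUdef, hDdef, mem_filter, mem_filter]
    exact ⟨⟨mem_univ _, A, hA, le_refl _⟩, ⟨mem_univ _, A, hA, le_refl _⟩⟩
  have hA1 : 𝒜.card ≤ (U ∩ D).card := by
    rw [← Finset.card_image_of_injective 𝒜 compl_injective]
    exact card_le_card hAsub
  -- ℬ ⊆ Uᶜ ∩ Dᶜ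
  have hB1 : ℬ.card ≤ (Uᶜ ∩ Dᶜ).card := by
    refine card_le_card fun B hB => ?_
    rw [mem_inter, mem_compl, mem_compl, hUdef, hDdef, mem_filter, mem_filter]
    constructor
    · rintro ⟨-, A, hA, h⟩
      refine (hIU A hA B hB).2 ?_
      rw [eq_univ_iff_forall]
      intro x
      by_cases hx : x ∈ A
      · exact mem_union_left _ hx
      · exact mem_union_right _ (h (mem_compl.2 hx))
    · rintro ⟨-, A, hA, h⟩
      refine (hIU A hA B hB).1 ?_
      rw [eq_empty_iff_forall_notMem]
      intro x hx
      rw [mem_inter] at hx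
      exact (mem_compl.1 (h hx.2)) hx.1
  have hcard : Fintype.card (Finset (Fin n)) = 2 ^ n := by
    rw [Fintype.card_finset, Fintype.card_fin]
  have h1 : 2 ^ n * (U ∩ D).card ≤ U.card * D.card := by
    have := hUup.card_inter_le_finset hDlow
    rwa [Fintype.card_fin] at this
  have h2 : 2 ^ n * (Uᶜ ∩ Dᶜ).card ≤ Uᶜ.card * Dᶜ.card := by
    have := hUclow.card_inter_le_finset hDcup
    rwa [Fintype.card_fin] at this
  have hu : U.card + Uᶜ.card = 2 ^ n := by
    rw [card_compl, hcard, Nat.add_sub_cancel' (hcard ▸ card_le_univ U)]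
  have hd : D.card + Dᶜ.card = 2 ^ n := by
    rw [card_compl, hcard, Nat.add_sub_cancel' (hcard ▸ card_le_univ D)]
  -- combine
  have key : 16 * (2 ^ (2 * n) * (𝒜.card * ℬ.card)) ≤ 2 ^ (4 * n) := by
    have e1 : 2 ^ (2 * n) * (𝒜.card * ℬ.card) = (2 ^ n * 𝒜.card) * (2 ^ n * ℬ.card) := by
      rw [two_mul, pow_add]; ring
    have step1 : 2 ^ (2 * n) * (𝒜.card * ℬ.card) ≤ (U.card * Uᶜ.card) * (D.card * Dᶜ.card) := by
      rw [e1]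
      calc (2 ^ n * 𝒜.card) * (2 ^ n * ℬ.card)
          ≤ (2 ^ n * (U ∩ D).card) * (2 ^ n * (Uᶜ ∩ Dᶜ).card) := by
            exact Nat.mul_le_mul (Nat.mul_le_mul_left _ hA1) (Nat.mul_le_mul_left _ hB1)
        _ ≤ (U.card * D.card) * (Uᶜ.card * Dᶜ.card) := Nat.mul_le_mul h1 h2
        _ = (U.card * Uᶜ.card) * (D.card * Dᶜ.card) := by ring
    have s1 : 4 * (U.card * Uᶜ.card) ≤ 2 ^ (2 * n) := by
      have := four_mul_le_sq U.card Uᶜ.card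
      rwa [hu, ← pow_mul, mul_comm n 2] at this
    have s2 : 4 * (D.card * Dᶜ.card) ≤ 2 ^ (2 * n) := by
      have := four_mul_le_sq D.card Dᶜ.card
      rwa [hd, ← pow_mul, mul_comm n 2] at this
    calc 16 * (2 ^ (2 * n) * (𝒜.card * ℬ.card))
        ≤ 16 * ((U.card * Uᶜ.card) * (D.card * Dᶜ.card)) := Nat.mul_le_mul_left _ step1
      _ = (4 * (U.card * Uᶜ.card)) * (4 * (D.card * Dᶜ.card)) := by ring
      _ ≤ 2 ^ (2 * n) * 2 ^ (2 * n) := Nat.mul_le_mul s1 s2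
      _ = 2 ^ (4 * n) := by rw [← pow_add]; ring_nf
  have e2 : 2 ^ (4 * n) = 16 * (2 ^ (2 * n) * 2 ^ (2 * n - 4)) := by
    rw [← pow_add]
    have : 16 = 2 ^ 4 := by norm_num
    rw [this, ← pow_add]
    congr 1
    omega
  rw [e2] at key
  have hpos : 0 < 16 * 2 ^ (2 * n) := by positivity
  have := Nat.le_of_mul_le_mul_left (a := 𝒜.card * ℬ.card) (b := 2 ^ (2 * n - 4)) ?_ hpos
  · exact this
  · calc 16 * 2 ^ (2 * n) * (𝒜.card * ℬ.card)
        = 16 * (2 ^ (2 * n) * (𝒜.card * ℬ.card)) := by ring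
      _ ≤ 16 * (2 ^ (2 * n) * 2 ^ (2 * n - 4)) := key
      _ = 16 * 2 ^ (2 * n) * 2 ^ (2 * n - 4) := by ring
end

section
/- Let n ≥ 2, d ≥ 1, and let 𝒜₁, 𝒜₂, ..., 𝒜_d be families of subsets of [n] = {1,...,n} that are pairwise cross-IU (i.e., 𝒜ᵢ and 𝒜ⱼ are cross-IU for all i ≠ j). Then ∑_{i=1}^{d} |𝒜ᵢ| ≤ max(2^n, d · 2^(n-2)). -/
open Finset

/-- If `𝒜₁, …, 𝒜_d` are pairwise cross-IU families of subsets of `[n]`, then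
`∑ |𝒜ᵢ| ≤ max (2^n) (d·2^(n-2))`. -/
theorem stmt_10 (n d : ℕ) (hn : 2 ≤ n) (hd : 1 ≤ d)
    (𝒜 : Fin d → Finset (Finset (Fin n)))
    (hIU : ∀ i j : Fin d, i ≠ j →
      ∀ A ∈ 𝒜 i, ∀ B ∈ 𝒜 j, A ∩ B ≠ ∅ ∧ A ∪ B ≠ Finset.univ) :
    ∑ i : Fin d, (𝒜 i).card ≤ max (2 ^ n) (d * 2 ^ (n - 2)) := by
  classical
  -- multiplicity of a set across the families
  set m : Finset (Fin n) → ℕ := fun S => #(univ.filter (fun i => S ∈ 𝒜 i)) with hm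
  -- the support
  set 𝒮 : Finset (Finset (Fin n)) := univ.filter (fun S => ∃ i, S ∈ 𝒜 i) with hSdef
  -- sets of multiplicity ≥ 2
  set M : Finset (Finset (Fin n)) := univ.filter (fun S => 2 ≤ m S) with hMdef
  have hMS : M ⊆ 𝒮 := by
    intro S hS
    simp only [hMdef, hSdef, mem_filter, mem_univ, true_and] at hS ⊢
    have h1 : (univ.filter (fun i => S ∈ 𝒜 i)).Nonempty := by
      rw [← card_pos]
      have : 2 ≤ #(univ.filter (fun i => S ∈ 𝒜 i)) := hS
      omega
    obtain ⟨i, hi⟩ := h1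
    exact ⟨i, (mem_filter.mp hi).2⟩
  -- Key lemma: sets in M conflict with nothing in the support
  have lemA : ∀ S ∈ M, ∀ T ∈ 𝒮, S ∩ T ≠ ∅ ∧ S ∪ T ≠ univ := by
    intro S hS T hT
    simp only [hMdef, mem_filter, mem_univ, true_and] at hS
    have hS' : 1 < #(univ.filter (fun i => S ∈ 𝒜 i)) := hS
    obtain ⟨i, hi, j, hj, hij⟩ := Finset.one_lt_card.mp hS'
    simp only [mem_filter, mem_univ, true_and] at hi hj
    simp only [hSdef, mem_filter, mem_univ, true_and] at hT
    obtain ⟨k, hk⟩ := hT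
    by_cases hik : i = k
    · exact hIU j k (by rw [← hik]; exact hij.symm) S hj T hk
    · exact hIU i k hik S hi T hk
  have Mint : ∀ S ∈ M, ∀ T ∈ M, S ∩ T ≠ ∅ := fun S hS T hT => (lemA S hS T (hMS hT)).1
  have Mco : ∀ S ∈ M, ∀ T ∈ M, S ∪ T ≠ univ := fun S hS T hT => (lemA S hS T (hMS hT)).2
  -- upper/lower closures of M and of the complements of M
  set U1 : Finset (Finset (Fin n)) := univ.filter (fun T => ∃ S ∈ M, S ⊆ T) with hU1
  set D1 : Finset (Finset (Fin n)) := univ.filter (fun T => ∃ S ∈ M, T ⊆ S) with hD1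
  set U2 : Finset (Finset (Fin n)) := univ.filter (fun T => ∃ S ∈ M, Sᶜ ⊆ T) with hU2
  set D2 : Finset (Finset (Fin n)) := univ.filter (fun T => ∃ S ∈ M, T ⊆ Sᶜ) with hD2
  have hcard2n : Fintype.card (Finset (Fin n)) = 2 ^ n := by
    rw [Fintype.card_finset, Fintype.card_fin]
  -- a family with no complementary pairs has at most 2^(n-1) members
  have half : ∀ F : Finset (Finset (Fin n)), (∀ S ∈ F, Sᶜ ∉ F) → 2 * #F ≤ 2 ^ n := by
    intro F hF
    have hinj : #(F.image (fun S => Sᶜ)) = #F :=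
      card_image_of_injective _ compl_injective
    have hdisj : Disjoint F (F.image (fun S => Sᶜ)) := by
      rw [disjoint_right]
      intro T hT hT'
      obtain ⟨S, hS, rfl⟩ := mem_image.mp hT
      exact hF S hS hT'
    calc 2 * #F = #F + #(F.image (fun S => Sᶜ)) := by omega
    _ = #(F ∪ F.image (fun S => Sᶜ)) := (card_union_of_disjoint hdisj).symm
    _ ≤ 2 ^ n := by rw [← hcard2n]; exact card_le_univ _
  -- upper set / lower set facts
  have hU1up : IsUpperSet (U1 : Set (Finset (Fin n))) := by
    intro a b hab ha
    simp only [hU1, coe_filter, Set.mem_setOf_eq, mem_univ, true_and] at ha ⊢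
    obtain ⟨S, hS, hSa⟩ := ha
    exact ⟨S, hS, hSa.trans hab⟩
  have hD1lo : IsLowerSet (D1 : Set (Finset (Fin n))) := by
    intro a b hab ha
    simp only [hD1, coe_filter, Set.mem_setOf_eq, mem_univ, true_and] at ha ⊢
    obtain ⟨S, hS, hSa⟩ := ha
    exact ⟨S, hS, hab.trans hSa⟩
  have hU2up : IsUpperSet (U2 : Set (Finset (Fin n))) := by
    intro a b hab ha
    simp only [hU2, coe_filter, Set.mem_setOf_eq, mem_univ, true_and] at ha ⊢
    obtain ⟨S, hS, hSa⟩ := ha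
    exact ⟨S, hS, hSa.trans hab⟩
  have hD2lo : IsLowerSet (D2 : Set (Finset (Fin n))) := by
    intro a b hab ha
    simp only [hD2, coe_filter, Set.mem_setOf_eq, mem_univ, true_and] at ha ⊢
    obtain ⟨S, hS, hSa⟩ := ha
    exact ⟨S, hS, hab.trans hSa⟩
  -- no complementary pairs in U1, D1, U2, D2
  have hU1c : 2 * #U1 ≤ 2 ^ n := by
    apply half
    intro T hT hT'
    simp only [hU1, mem_filter, mem_univ, true_and] at hT hT'
    obtain ⟨S, hS, hST⟩ := hT
    obtain ⟨S', hS', hST'⟩ := hT'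
    apply Mint S hS S' hS'
    have h1 : S ∩ S' ⊆ T ∩ Tᶜ := inter_subset_inter hST hST'
    rw [inter_compl] at h1
    exact subset_empty.mp h1
  have hD1c : 2 * #D1 ≤ 2 ^ n := by
    apply half
    intro T hT hT'
    simp only [hD1, mem_filter, mem_univ, true_and] at hT hT'
    obtain ⟨S, hS, hST⟩ := hT
    obtain ⟨S', hS', hST'⟩ := hT'
    apply Mco S hS S' hS'
    have h1 : T ∪ Tᶜ ⊆ S ∪ S' := union_subset_union hST hST'
    rw [union_compl] at h1
    exact univ_subset_iff.mp h1
  have hU2c : 2 * #U2 ≤ 2 ^ n := by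
    apply half
    intro T hT hT'
    simp only [hU2, mem_filter, mem_univ, true_and] at hT hT'
    obtain ⟨S, hS, hST⟩ := hT
    obtain ⟨S', hS', hST'⟩ := hT'
    apply Mco S hS S' hS'
    have h1 : Sᶜ ∩ S'ᶜ ⊆ T ∩ Tᶜ := inter_subset_inter hST hST'
    rw [inter_compl, subset_empty, ← compl_union] at h1
    rw [← compl_compl (S ∪ S'), h1, compl_empty]
  have hD2c : 2 * #D2 ≤ 2 ^ n := by
    apply half
    intro T hT hT'
    simp only [hD2, mem_filter, mem_univ, true_and] at hT hT'
    obtain ⟨S, hS, hST⟩ := hT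
    obtain ⟨S', hS', hST'⟩ := hT'
    apply Mint S hS S' hS'
    have h1 : T ∪ Tᶜ ⊆ Sᶜ ∪ S'ᶜ := union_subset_union hST hST'
    rw [union_compl, ← compl_inter] at h1
    have h2 : (S ∩ S')ᶜ = univ := univ_subset_iff.mp h1
    rw [← compl_compl (S ∩ S'), h2, compl_univ]
  -- M ⊆ U1 ∩ D1, and compl-image of M ⊆ U2 ∩ D2
  have hM1 : M ⊆ U1 ∩ D1 := by
    intro S hS
    simp only [hU1, hD1, mem_inter, mem_filter, mem_univ, true_and]
    exact ⟨⟨S, hS, Subset.rfl⟩, ⟨S, hS, Subset.rfl⟩⟩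
  have hM2 : M.image (fun S => Sᶜ) ⊆ U2 ∩ D2 := by
    intro T hT
    obtain ⟨S, hS, rfl⟩ := mem_image.mp hT
    simp only [hU2, hD2, mem_inter, mem_filter, mem_univ, true_and]
    exact ⟨⟨S, hS, Subset.rfl⟩, ⟨S, hS, Subset.rfl⟩⟩
  -- Harris-Kleitman applications
  have hk1 : 2 ^ n * #(U1 ∩ D1) ≤ #U1 * #D1 := by
    have := hU1up.card_inter_le_finset hD1lo
    rwa [Fintype.card_fin] at this
  have hk2 : 2 ^ n * #(U2 ∩ D2) ≤ #U2 * #D2 := by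
    have := hU2up.card_inter_le_finset hD2lo
    rwa [Fintype.card_fin] at this
  -- Daykin–Lovász: |M| ≤ 2^(n-2)
  have hMc : #M ≤ 2 ^ (n - 2) := by
    have h1 : 2 ^ n * #M ≤ 2 ^ n * #(U1 ∩ D1) :=
      Nat.mul_le_mul_left _ (card_le_card hM1)
    have e : 2 ^ n = 2 * 2 ^ (n - 1) := by
      rw [← pow_succ']; congr 1; omega
    have h2 : #U1 * #D1 ≤ 2 ^ (n - 1) * 2 ^ (n - 1) := by
      apply Nat.mul_le_mul <;> omega
    have e2 : 2 ^ (n - 1) * 2 ^ (n - 1) = 2 ^ n * 2 ^ (n - 2) := by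
      rw [← pow_add, ← pow_add]; congr 1; omega
    have h3 := h1.trans (hk1.trans (h2.trans_eq e2))
    exact Nat.le_of_mul_le_mul_left h3 (by positivity)
  -- lower bound on the conflict neighborhood N = U2 ∪ D2
  have hN : 3 * #M ≤ #(U2 ∪ D2) := by
    have hMI : #M ≤ #(U2 ∩ D2) := by
      calc #M = #(M.image (fun S => Sᶜ)) :=
            (card_image_of_injective _ compl_injective).symm
        _ ≤ #(U2 ∩ D2) := card_le_card hM2
    have hie : #(U2 ∪ D2) + #(U2 ∩ D2) = #U2 + #D2 := card_union_add_card_inter _ _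
    have hsq : 2 * #U2 * #D2 ≤ #U2 ^ 2 + #D2 ^ 2 := two_mul_le_add_sq _ _
    have h4 : 4 * (#U2 * #D2) ≤ (#U2 + #D2) * (#U2 + #D2) := by nlinarith
    have hle : #U2 + #D2 ≤ 2 ^ n := by omega
    have hud : 4 * (#U2 * #D2) ≤ 2 ^ n * (#U2 + #D2) :=
      h4.trans (Nat.mul_le_mul_right _ hle)
    have hMud : 2 ^ n * #M ≤ #U2 * #D2 :=
      (Nat.mul_le_mul_left _ hMI).trans hk2
    have h5 : 2 ^ n * #(U2 ∪ D2) + 2 ^ n * #(U2 ∩ D2) = 2 ^ n * (#U2 + #D2) := by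
      rw [← Nat.mul_add, hie]
    have key : 2 ^ n * (3 * #M) ≤ 2 ^ n * #(U2 ∪ D2) := by
      have e3 : 2 ^ n * (3 * #M) = 3 * (2 ^ n * #M) := by ring
      rw [e3]
      linarith [h5, hk2, hud, hMud]
    exact Nat.le_of_mul_le_mul_left key (by positivity)
  -- the support avoids the conflict neighborhood
  have hSN : Disjoint 𝒮 (U2 ∪ D2) := by
    rw [disjoint_left]
    intro T hT hT'
    rcases mem_union.mp hT' with h | h
    · simp only [hU2, mem_filter, mem_univ, true_and] at h
      obtain ⟨S, hS, hST⟩ := h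
      apply (lemA S hS T hT).2
      have h1 : S ∪ Sᶜ ⊆ S ∪ T := union_subset_union Subset.rfl hST
      rw [union_compl] at h1
      exact univ_subset_iff.mp h1
    · simp only [hD2, mem_filter, mem_univ, true_and] at h
      obtain ⟨S, hS, hST⟩ := h
      apply (lemA S hS T hT).1
      have h1 : S ∩ T ⊆ S ∩ Sᶜ := inter_subset_inter Subset.rfl hST
      rw [inter_compl] at h1
      exact subset_empty.mp h1
  have hScard : #𝒮 + #(U2 ∪ D2) ≤ 2 ^ n := by
    calc #𝒮 + #(U2 ∪ D2) = #(𝒮 ∪ (U2 ∪ D2)) := (card_union_of_disjoint hSN).symm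
      _ ≤ 2 ^ n := by rw [← hcard2n]; exact card_le_univ _
  -- express the total sum via multiplicities
  have hmS : ∀ S, m S = ∑ i : Fin d, if S ∈ 𝒜 i then 1 else 0 := by
    intro S; rw [hm]; exact card_filter _ _
  have hsum : ∑ i : Fin d, #(𝒜 i) = ∑ S ∈ 𝒮, m S := by
    have h1 : ∀ i : Fin d, #(𝒜 i) = ∑ S ∈ 𝒮, (if S ∈ 𝒜 i then 1 else 0) := by
      intro i
      rw [← card_filter]
      congr 1
      ext S
      simp only [hSdef, mem_filter, mem_univ, true_and]
      exact ⟨fun h => ⟨⟨i, h⟩, h⟩, fun h => h.2⟩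
    rw [Finset.sum_congr rfl (fun i _ => h1 i), Finset.sum_comm]
    exact Finset.sum_congr rfl (fun S _ => (hmS S).symm)
  -- bound the sum
  have hsplit : ∑ S ∈ 𝒮 \ M, m S + ∑ S ∈ M, m S = ∑ S ∈ 𝒮, m S :=
    Finset.sum_sdiff hMS
  have hb1 : ∑ S ∈ 𝒮 \ M, m S ≤ #(𝒮 \ M) := by
    have h1 := Finset.sum_le_card_nsmul (𝒮 \ M) m 1 ?_
    · simpa using h1
    · intro S hS
      have h2 := (mem_sdiff.mp hS).2
      simp only [hMdef, mem_filter, mem_univ, true_and] at h2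
      omega
  have hb2 : ∑ S ∈ M, m S ≤ #M * d := by
    have h1 := Finset.sum_le_card_nsmul M m d ?_
    · simpa using h1
    · intro S _
      calc m S ≤ #(univ : Finset (Fin d)) := card_filter_le _ _
        _ = d := by rw [card_univ, Fintype.card_fin]
  have hsdc : #(𝒮 \ M) + #M = #𝒮 := card_sdiff_add_card_eq_card hMS
  have htot : ∑ i : Fin d, #(𝒜 i) ≤ #(𝒮 \ M) + #M * d := by
    rw [hsum, ← hsplit]
    exact Nat.add_le_add hb1 hb2
  have h4p : 2 ^ n = 4 * 2 ^ (n - 2) := by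
    calc 2 ^ n = 2 ^ (2 + (n - 2)) := by congr 1; omega
      _ = 4 * 2 ^ (n - 2) := by rw [pow_add]; norm_num
  rcases le_or_gt d 4 with hd4 | hd4
  · refine le_trans ?_ (le_max_left _ _)
    have hq : #M * d ≤ #M * 4 := Nat.mul_le_mul_left _ hd4
    set q := #M * d with hqdef
    omega
  · refine le_trans ?_ (le_max_right _ _)
    obtain ⟨e, rfl⟩ : ∃ e, d = 4 + e := ⟨d - 4, by omega⟩
    have hq : #M * (4 + e) = #M * 4 + #M * e := by ring
    have hgp : (4 + e) * 2 ^ (n - 2) = 4 * 2 ^ (n - 2) + 2 ^ (n - 2) * e := by ring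
    have hme : #M * e ≤ 2 ^ (n - 2) * e := Nat.mul_le_mul_right _ hMc
    rw [hq] at htot
    rw [hgp]
    set A := #M * e with hA
    set B := 2 ^ (n - 2) * e with hB
    omega
end

section
/- Let n ≥ 2, d ≥ 5, and let 𝒜₁, ..., 𝒜_d be families of subsets of [n] = {1,...,n} that are pairwise cross-IU (i.e., 𝒜ᵢ and 𝒜ⱼ are cross-IU for all i ≠ j), with |𝒜₁| ≥ |𝒜₂| ≥ ... ≥ |𝒜_d|. Then |𝒜₁| + ... + |𝒜_d| ≤ d · 2^(n-2); moreover, if equality holds then 𝒜₁ = 𝒜₂ = ... = 𝒜_d. -/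
/-!
Let `L k` (`levelFamily 𝒜 k`) be the family of sets lying in more than `k` of the `𝒜 i`.
Double counting gives `∑ |𝒜 i| = ∑_{k<d} |L k| ≤ |L 0| + (d-1) |L 1|`, where `L 0`, `L 1` are
cross-IU and `L 1` is IU with itself. For any family with up-closure `U` and down-closure `D`,
the Harris–Kleitman inequality gives `2^n |ℱ| ≤ |U| |D|`, while the up-closures of
cross-intersecting families (and the down-closures of cross-union families) have sizes summing
to at most `2^n`, since no member of one is the complement of a member of the other. Maximising
the resulting bilinear bound over the box `|U(L 1)|, |D(L 1)| ≤ 2^(n-1)` gives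
`|L 0| + (d-1) |L 1| ≤ d 2^(n-2)` when `d ≥ 5`, with equality only if `|L 0| = 2^(n-2)`. In that
case every level has size `2^(n-2)`, so the top level `L (d-1)` equals `L 0`: a set lying in one
family lies in all of them.
-/

open Finset

def CrossIU {α : Type*} [Fintype α] [DecidableEq α] (𝒜 ℬ : Finset (Finset α)) : Prop :=
  ∀ A ∈ 𝒜, ∀ B ∈ ℬ, A ∩ B ≠ ∅ ∧ A ∪ B ≠ univ

section Closures

variable {α : Type*} [Fintype α] [DecidableEq α]

def upClosure (ℱ : Finset (Finset α)) : Finset (Finset α) :=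
  {S | ∃ F ∈ ℱ, F ⊆ S}

def downClosure (ℱ : Finset (Finset α)) : Finset (Finset α) :=
  {S | ∃ F ∈ ℱ, S ⊆ F}

variable {ℱ 𝒢 : Finset (Finset α)} {S : Finset α}

@[simp]
lemma mem_upClosure : S ∈ upClosure ℱ ↔ ∃ F ∈ ℱ, F ⊆ S := by
  simp [upClosure]

@[simp]
lemma mem_downClosure : S ∈ downClosure ℱ ↔ ∃ F ∈ ℱ, S ⊆ F := by
  simp [downClosure]

lemma isUpperSet_upClosure (ℱ : Finset (Finset α)) :
    IsUpperSet (upClosure ℱ : Set (Finset α)) := by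
  intro S T hST hS
  simp only [mem_coe, mem_upClosure] at hS ⊢
  obtain ⟨F, hF, hFS⟩ := hS
  exact ⟨F, hF, hFS.trans hST⟩

lemma isLowerSet_downClosure (ℱ : Finset (Finset α)) :
    IsLowerSet (downClosure ℱ : Set (Finset α)) := by
  intro S T hTS hS
  simp only [mem_coe, mem_downClosure] at hS ⊢
  obtain ⟨F, hF, hSF⟩ := hS
  exact ⟨F, hF, hTS.trans hSF⟩

lemma subset_upClosure_inter_downClosure (ℱ : Finset (Finset α)) :
    ℱ ⊆ upClosure ℱ ∩ downClosure ℱ := fun S hS ↦ by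
  simp only [mem_inter, mem_upClosure, mem_downClosure]
  exact ⟨⟨S, hS, subset_rfl⟩, ⟨S, hS, subset_rfl⟩⟩

lemma two_pow_mul_card_le_card_upClosure_mul_card_downClosure (ℱ : Finset (Finset α)) :
    2 ^ Fintype.card α * #ℱ ≤ #(upClosure ℱ) * #(downClosure ℱ) :=
  (Nat.mul_le_mul_left _ (card_le_card (subset_upClosure_inter_downClosure ℱ))).trans
    ((isUpperSet_upClosure ℱ).card_inter_le_finset (isLowerSet_downClosure ℱ))

lemma card_add_card_le_of_compl_notMem (h : ∀ S ∈ ℱ, Sᶜ ∉ 𝒢) :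
    #ℱ + #𝒢 ≤ 2 ^ Fintype.card α := by
  have hdisj : Disjoint ℱ (𝒢.image compl) := by
    simp only [disjoint_left, mem_image]
    rintro S hS ⟨T, hT, rfl⟩
    exact h _ hS (by simpa using hT)
  calc #ℱ + #𝒢 = #(ℱ ∪ 𝒢.image compl) := by
        rw [card_union_of_disjoint hdisj, card_image_of_injective _ compl_injective]
    _ ≤ 2 ^ Fintype.card α := by
        simpa only [Fintype.card_finset] using card_le_univ (ℱ ∪ 𝒢.image compl)

lemma card_upClosure_add_card_upClosure_le (h : ∀ A ∈ ℱ, ∀ B ∈ 𝒢, A ∩ B ≠ ∅) :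
    #(upClosure ℱ) + #(upClosure 𝒢) ≤ 2 ^ Fintype.card α := by
  refine card_add_card_le_of_compl_notMem fun S hS hSc ↦ ?_
  obtain ⟨A, hA, hAS⟩ := mem_upClosure.1 hS
  obtain ⟨B, hB, hBS⟩ := mem_upClosure.1 hSc
  refine h A hA B hB (subset_empty.1 ?_)
  simpa using inter_subset_inter hAS hBS

lemma card_downClosure_add_card_downClosure_le (h : ∀ A ∈ ℱ, ∀ B ∈ 𝒢, A ∪ B ≠ univ) :
    #(downClosure ℱ) + #(downClosure 𝒢) ≤ 2 ^ Fintype.card α := by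
  refine card_add_card_le_of_compl_notMem fun S hS hSc ↦ ?_
  obtain ⟨A, hA, hSA⟩ := mem_downClosure.1 hS
  obtain ⟨B, hB, hSB⟩ := mem_downClosure.1 hSc
  refine h A hA B hB (univ_subset_iff.1 ?_)
  simpa using union_subset_union hSA hSB

end Closures

/-- The numerical core of the pair bound: `4N = 2^n`, `b₁, b₂` are the sizes of two families and
`X`, `Y` the sizes of their up- and down-closures. -/
lemma weighted_sum_le {d N b₁ b₂ X₁ X₂ Y₁ Y₂ : ℤ} (hd : 5 ≤ d) (hN : 0 < N)
    (hY₁ : 0 ≤ Y₁) (hX₂ : 0 ≤ X₂) (hY₂ : 0 ≤ Y₂)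
    (hX₂N : X₂ ≤ 2 * N) (hY₂N : Y₂ ≤ 2 * N) (hX : X₁ + X₂ ≤ 4 * N) (hY : Y₁ + Y₂ ≤ 4 * N)
    (h₁ : 4 * N * b₁ ≤ X₁ * Y₁) (h₂ : 4 * N * b₂ ≤ X₂ * Y₂) :
    b₁ + (d - 1) * b₂ ≤ d * N ∧ (b₁ + (d - 1) * b₂ = d * N → b₁ = N) := by
  have hXY₁ : X₁ * Y₁ ≤ (4 * N - X₂) * (4 * N - Y₂) :=
    mul_le_mul (by linarith) (by linarith) hY₁ (by linarith)
  -- with `x = 2N - X₂`, `y = 2N - Y₂`: `2(4dN² - (4N-X₂)(4N-Y₂) - (d-1)X₂Y₂)` equals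
  -- `2(d-4)N(x+y) + d(X₂y + Y₂x)`
  have slack : 4 * N * (b₁ + (d - 1) * b₂) + (d - 4) * N * ((2 * N - X₂) + (2 * N - Y₂))
      ≤ 4 * N * (d * N) := by
    nlinarith [mul_le_mul_of_nonneg_left h₂ (by linarith : (0 : ℤ) ≤ d - 1),
      mul_nonneg (mul_nonneg (by linarith : (0 : ℤ) ≤ d) hX₂) (by linarith : 0 ≤ 2 * N - Y₂),
      mul_nonneg (mul_nonneg (by linarith : (0 : ℤ) ≤ d) hY₂) (by linarith : 0 ≤ 2 * N - X₂)]
  have hloss : 0 ≤ (d - 4) * N * ((2 * N - X₂) + (2 * N - Y₂)) :=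
    mul_nonneg (mul_nonneg (by linarith) hN.le) (by linarith)
  refine ⟨le_of_mul_le_mul_left (by linarith) (by positivity : 0 < 4 * N), fun heq ↦ ?_⟩
  have hfull : X₂ = 2 * N ∧ Y₂ = 2 * N := by
    have : (d - 4) * N * ((2 * N - X₂) + (2 * N - Y₂)) ≤ 0 := by rw [heq] at slack; linarith
    have := nonpos_of_mul_nonpos_right this (mul_pos (by linarith) hN)
    constructor <;> linarith
  have hb₁ : b₁ ≤ N := by
    rw [hfull.1, hfull.2] at hXY₁
    nlinarith
  have hb₂ : b₂ ≤ N := by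
    rw [hfull.1, hfull.2] at h₂
    nlinarith
  nlinarith

theorem CrossIU.card_add_mul_card_le {α : Type*} [Fintype α] [DecidableEq α]
    {ℋ 𝒢 : Finset (Finset α)} {d : ℕ} (hℋ𝒢 : CrossIU ℋ 𝒢) (h𝒢 : CrossIU 𝒢 𝒢)
    (hα : 2 ≤ Fintype.card α) (hd : 5 ≤ d) :
    #ℋ + (d - 1) * #𝒢 ≤ d * 2 ^ (Fintype.card α - 2) ∧
      (#ℋ + (d - 1) * #𝒢 = d * 2 ^ (Fintype.card α - 2) → #ℋ = 2 ^ (Fintype.card α - 2)) := by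
  set N := 2 ^ (Fintype.card α - 2)
  have h4N : 2 ^ Fintype.card α = 4 * N := by rw [← pow_sub_mul_pow 2 hα]; ring
  have hUℋ := card_upClosure_add_card_upClosure_le fun A hA B hB ↦ (hℋ𝒢 A hA B hB).1
  have hDℋ := card_downClosure_add_card_downClosure_le fun A hA B hB ↦ (hℋ𝒢 A hA B hB).2
  have hU𝒢 := card_upClosure_add_card_upClosure_le fun A hA B hB ↦ (h𝒢 A hA B hB).1
  have hD𝒢 := card_downClosure_add_card_downClosure_le fun A hA B hB ↦ (h𝒢 A hA B hB).2
  have hKℋ := two_pow_mul_card_le_card_upClosure_mul_card_downClosure ℋ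
  have hK𝒢 := two_pow_mul_card_le_card_upClosure_mul_card_downClosure 𝒢
  rw [h4N] at hUℋ hDℋ hU𝒢 hD𝒢 hKℋ hK𝒢
  have hd₁ : ((d - 1 : ℕ) : ℤ) = d - 1 := by push_cast [show 1 ≤ d by omega]; ring
  zify
  rw [hd₁]
  exact weighted_sum_le (X₁ := #(upClosure ℋ)) (X₂ := #(upClosure 𝒢)) (Y₁ := #(downClosure ℋ))
    (Y₂ := #(downClosure 𝒢)) (by exact_mod_cast hd) (by positivity) (by positivity) (by positivity)
    (by positivity) (by omega) (by omega) (by exact_mod_cast hUℋ) (by exact_mod_cast hDℋ)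
    (by exact_mod_cast hKℋ) (by exact_mod_cast hK𝒢)

lemma sum_range_le_add_mul_of_antitone {f : ℕ → ℕ} (hf : Antitone f) (d : ℕ) :
    ∑ k ∈ range d, f k ≤ f 0 + (d - 1) * f 1 := by
  rcases d with _ | e
  · simp
  rw [sum_range_succ', add_comm, add_tsub_cancel_right]
  gcongr
  simpa using sum_le_card_nsmul (range e) (fun k ↦ f (k + 1)) (f 1)
    fun k _ ↦ hf (Nat.le_add_left 1 k)

lemma sum_range_le_mul_add_of_antitone {f : ℕ → ℕ} (hf : Antitone f) (d : ℕ) :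
    ∑ k ∈ range d, f k ≤ (d - 1) * f 0 + f (d - 1) := by
  rcases d with _ | e
  · simp
  rw [sum_range_succ, add_tsub_cancel_right]
  gcongr
  simpa using sum_le_card_nsmul (range e) f (f 0) fun k _ ↦ hf (Nat.zero_le k)

section Levels

variable {ι α : Type*} [Fintype ι] [DecidableEq α] (𝒜 : ι → Finset (Finset α))

def memCount (S : Finset α) : ℕ := #{i | S ∈ 𝒜 i}

lemma memCount_le_card (S : Finset α) : memCount 𝒜 S ≤ Fintype.card ι :=
  card_filter_le _ _

variable [Fintype α]

def levelFamily (k : ℕ) : Finset (Finset α) := {S | k < memCount 𝒜 S}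

variable {𝒜}

@[simp]
lemma mem_levelFamily {k : ℕ} {S : Finset α} : S ∈ levelFamily 𝒜 k ↔ k < memCount 𝒜 S := by
  simp [levelFamily]

lemma levelFamily_anti : Antitone (levelFamily 𝒜) := fun _ _ hjk S ↦ by
  simp only [mem_levelFamily]
  omega

lemma sum_card_eq_sum_card_levelFamily :
    ∑ i, #(𝒜 i) = ∑ k ∈ range (Fintype.card ι), #(levelFamily 𝒜 k) := by
  have hcount (S : Finset α) :
      memCount 𝒜 S = ∑ k ∈ range (Fintype.card ι), if k < memCount 𝒜 S then 1 else 0 := by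
    rw [← card_filter]
    have : ({k ∈ range (Fintype.card ι) | k < memCount 𝒜 S} : Finset ℕ) = range (memCount 𝒜 S) := by
      ext k
      simp only [mem_filter, mem_range]
      have := memCount_le_card 𝒜 S
      omega
    rw [this, card_range]
  calc ∑ i, #(𝒜 i) = ∑ S, memCount 𝒜 S := by
        simp only [memCount, card_filter]
        rw [sum_comm]
        simp
    _ = _ := by
        simp only [levelFamily, card_filter]
        rw [sum_comm]
        exact sum_congr rfl fun S _ ↦ hcount S

lemma mem_of_mem_levelFamily_card_sub_one {S : Finset α}
    (hS : S ∈ levelFamily 𝒜 (Fintype.card ι - 1)) (j : ι) : S ∈ 𝒜 j := by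
  have hall : ({i | S ∈ 𝒜 i} : Finset ι) = univ := by
    refine eq_univ_of_card _ (le_antisymm (memCount_le_card 𝒜 S) ?_)
    rw [mem_levelFamily] at hS
    exact Nat.le_of_pred_lt hS
  have hj : j ∈ ({i | S ∈ 𝒜 i} : Finset ι) := by rw [hall]; exact mem_univ j
  exact (mem_filter.1 hj).2

lemma subset_levelFamily_zero (i : ι) : 𝒜 i ⊆ levelFamily 𝒜 0 := fun _ hS ↦
  mem_levelFamily.2 (card_pos.2 ⟨i, mem_filter.2 ⟨mem_univ i, hS⟩⟩)

lemma eq_of_levelFamily_card_sub_one_eq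
    (h : levelFamily 𝒜 (Fintype.card ι - 1) = levelFamily 𝒜 0) (i j : ι) : 𝒜 i = 𝒜 j := by
  have hsub (i j : ι) : 𝒜 i ⊆ 𝒜 j := fun _ hS ↦
    mem_of_mem_levelFamily_card_sub_one (h ▸ subset_levelFamily_zero i hS) j
  exact (hsub i j).antisymm (hsub j i)

lemma exists_of_mem_levelFamily_zero {S : Finset α} (hS : S ∈ levelFamily 𝒜 0) : ∃ i, S ∈ 𝒜 i := by
  obtain ⟨i, hi⟩ := card_pos.1 (mem_levelFamily.1 hS)
  exact ⟨i, (mem_filter.1 hi).2⟩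

lemma exists_ne_of_mem_levelFamily_one {S : Finset α} (hS : S ∈ levelFamily 𝒜 1) (j : ι) :
    ∃ i ≠ j, S ∈ 𝒜 i := by
  obtain ⟨i, hi, i', hi', hii'⟩ := one_lt_card.1 (mem_levelFamily.1 hS)
  rw [mem_filter] at hi hi'
  obtain rfl | hij := eq_or_ne i j
  exacts [⟨i', hii'.symm, hi'.2⟩, ⟨i, hij, hi.2⟩]

lemma crossIU_levelFamily_zero_one (h : ∀ i j, i ≠ j → CrossIU (𝒜 i) (𝒜 j)) :
    CrossIU (levelFamily 𝒜 0) (levelFamily 𝒜 1) := fun A hA B hB ↦ by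
  obtain ⟨i, hAi⟩ := exists_of_mem_levelFamily_zero hA
  obtain ⟨j, hji, hBj⟩ := exists_ne_of_mem_levelFamily_one hB i
  exact h i j hji.symm A hAi B hBj

lemma crossIU_levelFamily_one (h : ∀ i j, i ≠ j → CrossIU (𝒜 i) (𝒜 j)) :
    CrossIU (levelFamily 𝒜 1) (levelFamily 𝒜 1) := fun A hA B hB ↦
  crossIU_levelFamily_zero_one h A (levelFamily_anti zero_le_one hA) B hB

end Levels

theorem stmt_11_general (n d : ℕ) (hn : 2 ≤ n) (hd : 5 ≤ d)
    (𝒜 : Fin d → Finset (Finset (Fin n)))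
    (hIU : ∀ i j : Fin d, i ≠ j →
      ∀ A ∈ 𝒜 i, ∀ B ∈ 𝒜 j, A ∩ B ≠ ∅ ∧ A ∪ B ≠ Finset.univ) :
    ∑ i : Fin d, (𝒜 i).card ≤ d * 2 ^ (n - 2) ∧
      (∑ i : Fin d, (𝒜 i).card = d * 2 ^ (n - 2) → ∀ i j : Fin d, 𝒜 i = 𝒜 j) := by
  obtain ⟨hpair, hpair_eq⟩ := (crossIU_levelFamily_zero_one hIU).card_add_mul_card_le
    (crossIU_levelFamily_one hIU) (by simpa using hn) hd
  simp only [Fintype.card_fin] at hpair hpair_eq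
  have hanti : Antitone fun k ↦ #(levelFamily 𝒜 k) := card_mono.comp_antitone levelFamily_anti
  have hsum : ∑ i, #(𝒜 i) = ∑ k ∈ range d, #(levelFamily 𝒜 k) := by
    simpa using sum_card_eq_sum_card_levelFamily (𝒜 := 𝒜)
  have hlow : ∑ i, #(𝒜 i) ≤ #(levelFamily 𝒜 0) + (d - 1) * #(levelFamily 𝒜 1) :=
    hsum ▸ sum_range_le_add_mul_of_antitone hanti d
  refine ⟨hlow.trans hpair, fun htotal ↦ eq_of_levelFamily_card_sub_one_eq ?_⟩
  have hL₀ := hpair_eq (le_antisymm hpair (htotal ▸ hlow))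
  have hhigh := hsum ▸ sum_range_le_mul_add_of_antitone hanti d
  rw [htotal, hL₀, Nat.sub_one_mul] at hhigh
  rw [Fintype.card_fin]
  refine eq_of_subset_of_card_le (levelFamily_anti (Nat.zero_le _)) ?_
  have : 2 ^ (n - 2) ≤ d * 2 ^ (n - 2) := Nat.le_mul_of_pos_left _ (by omega)
  omega

/-- If `d ≥ 5` and `𝒜₁, …, 𝒜_d` are pairwise cross-IU families of subsets of
`[n]` with nonincreasing cardinalities, then `∑ |𝒜ᵢ| ≤ d·2^(n-2)`, with
equality only if all the families coincide. -/
theorem stmt_11 (n d : ℕ) (hn : 2 ≤ n) (hd : 5 ≤ d)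
    (𝒜 : Fin d → Finset (Finset (Fin n)))
    (hIU : ∀ i j : Fin d, i ≠ j →
      ∀ A ∈ 𝒜 i, ∀ B ∈ 𝒜 j, A ∩ B ≠ ∅ ∧ A ∪ B ≠ Finset.univ)
    (hmono : ∀ i j : Fin d, i ≤ j → (𝒜 j).card ≤ (𝒜 i).card) :
    ∑ i : Fin d, (𝒜 i).card ≤ d * 2 ^ (n - 2) ∧
      (∑ i : Fin d, (𝒜 i).card = d * 2 ^ (n - 2) → ∀ i j : Fin d, 𝒜 i = 𝒜 j) :=
  stmt_11_general n d hn hd 𝒜 hIU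
end
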